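/- arXiv:2006.15308 — 3 statements merged into one kernel-verified Lean document; each statement's English description precedes it below -/
import Mathlib

section
/- Hawk-Dove with interdependent preferences: let G have A={H,D}, π(H,H)=0, π(H,D)=1+g, π(D,H)=1−l, π(D,D)=1, with g>0 and l∈(0,1). Assume q(n,n')=1 whenever n>n'. Suppose there is an N with k_N ≤ l+g < k_{N+1} and g > k_{n+1}−k_n for all n≤N, and suppose Θ_ID contains for each n a type θ^n with cognitive level n and utility u_{θ^n}(a,a',θ')=1 if (θ'=θ^n and a=D) or (θ'≠θ^n and a=H), and 0 otherwise. Then: (i) if g>l there exists an evolutionarily stable configuration (μ*,b*) with C(μ*)⊆{θ^n}_{n=1}^{N} and |C(μ*)|>1, whose behaviour is: when two incumbents of different cognitive levels meet, the higher-level one plays H and the lower-level one plays D, and when two incumbents of the same cognitive level meet they both play D; (ii) if g=l there exists a neutrally stable configuration with the same properties; (iii) if g<l there exists no neutrally stable configuration (μ*,b*) with C(μ*)⊆{θ^n}_{n=1}^{∞}. -/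
open scoped Classical
set_option maxHeartbeats 1000000

noncomputable section

variable {A : Type} [Fintype A]

/-- Mixed strategies over a finite action set. -/
def Mixed (A : Type) [Fintype A] : Type :=
  { p : A → ℝ // (∀ a, 0 ≤ p a) ∧ ∑ a, p a = 1 }

/-- The pure (degenerate) mixed strategy on action `a`. -/
def pureStrat (a : A) : Mixed A :=
  ⟨fun a' => if a' = a then 1 else 0, by
    refine ⟨fun a' => ?_, by simp⟩
    by_cases h : a' = a <;> simp [h]⟩

/-- Bilinear extension of a payoff function to mixed strategies. -/
def exPay (f : A → A → ℝ) (σ σ' : Mixed A) : ℝ :=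
  ∑ a, ∑ a', σ.1 a * σ'.1 a' * f a a'

/-- Best replies to `σ'` under utility `u`. -/
def BR (u : A → A → ℝ) (σ' : Mixed A) : Set (Mixed A) :=
  { σ | ∀ τ : Mixed A, exPay u τ σ' ≤ exPay u σ σ' }

/-- Undominated strategies under utility `u`: best replies to some strategy. -/
def Undom (u : A → A → ℝ) : Set (Mixed A) :=
  { σ | ∃ σ' : Mixed A, σ ∈ BR u σ' }

/-- Nash equilibria of the complete-information game induced by utilities `u`, `u'`. -/
def NE (u u' : A → A → ℝ) : Set (Mixed A × Mixed A) :=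
  { p | p.1 ∈ BR u p.2 ∧ p.2 ∈ BR u' p.1 }

/-- Deception equilibria: profiles maximising the deceiver's utility `u` subject
to the deceived party (with utility `u'`) playing an undominated strategy. -/
def DE (u u' : A → A → ℝ) : Set (Mixed A × Mixed A) :=
  { p | p.2 ∈ Undom u' ∧
      ∀ σ σ' : Mixed A, σ' ∈ Undom u' → exPay u σ σ' ≤ exPay u p.1 p.2 }

/-- Fitness-maximising deception equilibria (fitness payoff `pay`). -/
def FMDE (pay u u' : A → A → ℝ) : Set (Mixed A × Mixed A) :=
  { p | p ∈ DE u u' ∧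
      ∀ σ σ' : Mixed A, σ' ∈ Undom u' → exPay pay σ σ' ≤ exPay pay p.1 p.2 }

/-- A type: a subjective utility together with a cognitive level. -/
abbrev GType (A : Type) : Type := (A → A → ℝ) × ℕ+

/-- The environment: fitness payoffs, cognitive costs and deception probabilities. -/
structure Model (A : Type) [Fintype A] : Type where
  π : A → A → ℝ
  k : ℕ+ → ℝ
  q : ℕ+ → ℕ+ → ℝ
  k_nonneg : ∀ n, 0 ≤ k n
  k_mono : StrictMono k
  k_one : k 1 = 0
  k_tendsto : Filter.Tendsto k Filter.atTop Filter.atTop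
  q_nonneg : ∀ n n', 0 ≤ q n n'
  q_le_one : ∀ n n', q n n' ≤ 1
  q_pos_iff : ∀ n n', 0 < q n n' ↔ n' < n

/-- A finite-support probability distribution over types. -/
structure TypeDist (A : Type) [Fintype A] : Type where
  w : GType A →₀ ℝ
  nonneg : ∀ θ, 0 ≤ w θ
  total : ∑ θ ∈ w.support, w θ = 1

/-- A configuration: a type distribution together with a behaviour policy. -/
structure Config {A : Type} [Fintype A] (M : Model A) : Type where
  dist : TypeDist A
  bN : GType A → GType A → Mixed A
  bD : GType A → GType A → Mixed A
  bN_mem : ∀ θ ∈ dist.w.support, ∀ θ' ∈ dist.w.support,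
    M.q θ.2 θ'.2 + M.q θ'.2 θ.2 < 1 → (bN θ θ', bN θ' θ) ∈ NE θ.1 θ'.1
  bD_mem : ∀ θ ∈ dist.w.support, ∀ θ' ∈ dist.w.support,
    θ'.2 < θ.2 → (bD θ θ', bD θ' θ) ∈ DE θ.1 θ'.1

/-- The incumbents: the support of the type distribution. -/
def Config.supp {M : Model A} (c : Config M) : Finset (GType A) := c.dist.w.support

/-- Conditional fitness of `θ` when matched against `θ'`. -/
def condFit {M : Model A} (c : Config M) (θ θ' : GType A) : ℝ :=
  (M.q θ.2 θ'.2 + M.q θ'.2 θ.2) * exPay M.π (c.bD θ θ') (c.bD θ' θ)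
    + (1 - M.q θ.2 θ'.2 - M.q θ'.2 θ.2) * exPay M.π (c.bN θ θ') (c.bN θ' θ)

/-- Expected fitness of type `θ` in configuration `c`. -/
def expFit {M : Model A} (c : Config M) (θ : GType A) : ℝ :=
  (∑ θ' ∈ c.supp, c.dist.w θ' * condFit c θ θ') - M.k θ.2

/-- Average fitness in the population. -/
def avgFit {M : Model A} (c : Config M) : ℝ :=
  ∑ θ ∈ c.supp, c.dist.w θ * expFit c θ

/-- Payoff function of the type game induced by configuration `c`. -/
def typePay {M : Model A} (c : Config M) (θ θ' : GType A) : ℝ :=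
  condFit c θ θ' - M.k θ.2

/-- Bilinear extension of a type-game payoff to finitely supported weights. -/
def playT {A : Type} [Fintype A] (F : GType A → GType A → ℝ) (x y : GType A →₀ ℝ) : ℝ :=
  ∑ θ ∈ x.support, ∑ θ' ∈ y.support, x θ * y θ' * F θ θ'

/-- `μ` is a neutrally stable strategy of the symmetric game with pure-strategy
set `S` and payoff `F`. -/
def IsNSSOn (F : GType A → GType A → ℝ) (S : Finset (GType A)) (μ : TypeDist A) : Prop :=
  ∀ ν : TypeDist A, ν.w.support ⊆ S →
    ∃ εb : ℝ, εb ∈ Set.Ioo (0:ℝ) 1 ∧ ∀ ε ∈ Set.Ioo (0:ℝ) εb,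
      playT F ν.w ((1 - ε) • μ.w + ε • ν.w) ≤ playT F μ.w ((1 - ε) • μ.w + ε • ν.w)

/-- `ct` is focal with respect to `c`. -/
def Focal {M : Model A} (c ct : Config M) : Prop :=
  c.supp ⊆ ct.supp ∧
    ∀ θ ∈ c.supp, ∀ θ' ∈ c.supp, ct.bN θ θ' = c.bN θ θ' ∧ ct.bD θ θ' = c.bD θ θ'

/-- Neutrally stable configuration. -/
def IsNSC {M : Model A} (c : Config M) : Prop :=
  ∀ μ' : TypeDist A, ∃ εb : ℝ, εb ∈ Set.Ioo (0:ℝ) 1 ∧ ∀ ε ∈ Set.Ioo (0:ℝ) εb,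
    ∀ ct : Config M, Focal c ct → ct.dist.w = (1 - ε) • c.dist.w + ε • μ'.w →
      IsNSSOn (typePay ct) ct.supp c.dist

/-- The efficient payoff `π̂`. -/
def effPay (M : Model A) [Nonempty A] : ℝ :=
  Finset.univ.sup' Finset.univ_nonempty
    (fun p : A × A => (M.π p.1 p.2 + M.π p.2 p.1) / 2)

/-- The deviation gain of action `a`. -/
def devGain (M : Model A) [Nonempty A] (a : A) : ℝ :=
  (Finset.univ.sup' Finset.univ_nonempty fun a' => M.π a' a) - M.π a a

/-- The effective cost of deception `c = min_{n ≥ 2} k_n / q(n,1)`. -/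
def effCost (M : Model A) : ℝ :=
  ⨅ n : { m : ℕ+ // 2 ≤ m }, M.k n.1 / M.q n.1 1

/-- Pure configuration with outcome `a`. -/
def IsPureCfg {M : Model A} (c : Config M) (a : A) : Prop :=
  ∀ θ ∈ c.supp, ∀ θ' ∈ c.supp,
    (M.q θ.2 θ'.2 + M.q θ'.2 θ.2 < 1 → c.bN θ θ' = pureStrat a) ∧
    (0 < M.q θ.2 θ'.2 → c.bD θ θ' = pureStrat a)

/-- Genericity of a symmetric game. -/
def Generic (pay : A → A → ℝ) : Prop :=
  ∀ a a' b b' : A, ({a, a'} : Finset A) ≠ {b, b'} →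
    pay a a' ≠ pay b b' ∧ pay a a' + pay a' a ≠ pay b b' + pay b' b

/-- The pure maxmin value. -/
def maxminVal (M : Model A) [Nonempty A] : ℝ :=
  Finset.univ.sup' Finset.univ_nonempty fun a =>
    Finset.univ.inf' Finset.univ_nonempty fun a' => M.π a a'

/-! ### The model with type-interdependent preferences -/

variable {T : Type}

/-- The environment with type-interdependent preferences: `T` is the set of types `Θ_ID`;
each type has a cognitive level and a utility over action profiles and the opponent's type. -/
structure IDModel (A : Type) [Fintype A] (T : Type) : Type where
  π : A → A → ℝ
  lvl : T → ℕ+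
  util : T → A → A → T → ℝ
  k : ℕ+ → ℝ
  q : ℕ+ → ℕ+ → ℝ
  k_nonneg : ∀ n, 0 ≤ k n
  k_mono : StrictMono k
  k_one : k 1 = 0
  k_tendsto : Filter.Tendsto k Filter.atTop Filter.atTop
  q_nonneg : ∀ n n', 0 ≤ q n n'
  q_le_one : ∀ n n', q n n' ≤ 1
  q_pos_iff : ∀ n n', 0 < q n n' ↔ n' < n

/-- The utility of type `t` facing opponent type `t'`, as a function of action profiles. -/
def IDModel.u (M : IDModel A T) (t t' : T) : A → A → ℝ := fun a a' => M.util t a a' t'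

/-- Best replies of type `t` to strategy `σ'` of opponent type `t'`. -/
def BRID (M : IDModel A T) (t : T) (σ' : Mixed A) (t' : T) : Set (Mixed A) :=
  { σ | ∀ τ : Mixed A, exPay (M.u t t') τ σ' ≤ exPay (M.u t t') σ σ' }

/-- Undominated strategies of type `t`. -/
def UndomID (M : IDModel A T) (t : T) : Set (Mixed A) :=
  { σ | ∃ σ' : Mixed A, ∃ t' : T, σ ∈ BRID M t σ' t' }

/-- Nash equilibria of the complete-information game between types `t` and `t'`. -/
def NEID (M : IDModel A T) (t t' : T) : Set (Mixed A × Mixed A) :=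
  { p | p.1 ∈ BRID M t p.2 t' ∧ p.2 ∈ BRID M t' p.1 t }

/-- Deception equilibria of deceiver `t` against deceived `t'`. -/
def DEID (M : IDModel A T) (t t' : T) : Set (Mixed A × Mixed A) :=
  { p | p.2 ∈ UndomID M t' ∧ ∀ σ σ' : Mixed A, σ' ∈ UndomID M t' →
      exPay (M.u t t') σ σ' ≤ exPay (M.u t t') p.1 p.2 }

/-- A finite-support probability distribution over types. -/
structure DistID (T : Type) : Type where
  w : T →₀ ℝ
  nonneg : ∀ t, 0 ≤ w t
  total : ∑ t ∈ w.support, w t = 1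

/-- A configuration in the interdependent model. -/
structure ConfigID {A : Type} [Fintype A] {T : Type} (M : IDModel A T) : Type where
  dist : DistID T
  bN : T → T → Mixed A
  bD : T → T → Mixed A
  bN_mem : ∀ t ∈ dist.w.support, ∀ t' ∈ dist.w.support,
    M.q (M.lvl t) (M.lvl t') + M.q (M.lvl t') (M.lvl t) < 1 →
      (bN t t', bN t' t) ∈ NEID M t t'
  bD_mem : ∀ t ∈ dist.w.support, ∀ t' ∈ dist.w.support,
    M.lvl t' < M.lvl t → (bD t t', bD t' t) ∈ DEID M t t'

/-- The incumbents. -/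
def ConfigID.supp {M : IDModel A T} (c : ConfigID M) : Finset T := c.dist.w.support

/-- Conditional fitness of `t` against `t'`. -/
def condFitID {M : IDModel A T} (c : ConfigID M) (t t' : T) : ℝ :=
  (M.q (M.lvl t) (M.lvl t') + M.q (M.lvl t') (M.lvl t)) * exPay M.π (c.bD t t') (c.bD t' t)
    + (1 - M.q (M.lvl t) (M.lvl t') - M.q (M.lvl t') (M.lvl t)) *
        exPay M.π (c.bN t t') (c.bN t' t)

/-- Expected fitness of type `t`. -/
def expFitID {M : IDModel A T} (c : ConfigID M) (t : T) : ℝ :=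
  (∑ t' ∈ c.supp, c.dist.w t' * condFitID c t t') - M.k (M.lvl t)

/-- Payoff of the induced type game. -/
def typePayID {M : IDModel A T} (c : ConfigID M) (t t' : T) : ℝ :=
  condFitID c t t' - M.k (M.lvl t)

/-- Bilinear extension of a type-game payoff to finitely supported weights. -/
def playTID (F : T → T → ℝ) (x y : T →₀ ℝ) : ℝ :=
  ∑ t ∈ x.support, ∑ t' ∈ y.support, x t * y t' * F t t'

/-- Neutrally stable strategy of the type game with pure strategies `S` and payoff `F`. -/
def IsNSSOnID (F : T → T → ℝ) (S : Finset T) (μ : DistID T) : Prop :=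
  ∀ ν : DistID T, ν.w.support ⊆ S →
    ∃ εb : ℝ, εb ∈ Set.Ioo (0:ℝ) 1 ∧ ∀ ε ∈ Set.Ioo (0:ℝ) εb,
      playTID F ν.w ((1 - ε) • μ.w + ε • ν.w) ≤ playTID F μ.w ((1 - ε) • μ.w + ε • ν.w)

/-- Evolutionarily stable strategy of the type game with pure strategies `S`, payoff `F`. -/
def IsESSOnID (F : T → T → ℝ) (S : Finset T) (μ : DistID T) : Prop :=
  ∀ ν : DistID T, ν.w.support ⊆ S → ν.w ≠ μ.w →
    ∃ εb : ℝ, εb ∈ Set.Ioo (0:ℝ) 1 ∧ ∀ ε ∈ Set.Ioo (0:ℝ) εb,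
      playTID F ν.w ((1 - ε) • μ.w + ε • ν.w) < playTID F μ.w ((1 - ε) • μ.w + ε • ν.w)

/-- `ct` is focal with respect to `c`. -/
def FocalID {M : IDModel A T} (c ct : ConfigID M) : Prop :=
  c.supp ⊆ ct.supp ∧
    ∀ t ∈ c.supp, ∀ t' ∈ c.supp, ct.bN t t' = c.bN t t' ∧ ct.bD t t' = c.bD t t'

/-- Neutrally stable configuration. -/
def IsNSCID {M : IDModel A T} (c : ConfigID M) : Prop :=
  ∀ μ' : DistID T, ∃ εb : ℝ, εb ∈ Set.Ioo (0:ℝ) 1 ∧ ∀ ε ∈ Set.Ioo (0:ℝ) εb,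
    ∀ ct : ConfigID M, FocalID c ct → ct.dist.w = (1 - ε) • c.dist.w + ε • μ'.w →
      IsNSSOnID (typePayID ct) ct.supp c.dist

/-- Evolutionarily stable configuration. -/
def IsESCID {M : IDModel A T} (c : ConfigID M) : Prop :=
  ∀ μ' : DistID T, μ'.w ≠ c.dist.w →
    ∃ εb : ℝ, εb ∈ Set.Ioo (0:ℝ) 1 ∧ ∀ ε ∈ Set.Ioo (0:ℝ) εb,
      ∀ ct : ConfigID M, FocalID c ct → ct.dist.w = (1 - ε) • c.dist.w + ε • μ'.w →
        IsESSOnID (typePayID ct) ct.supp c.dist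

/-- Pure configuration with outcome `a`. -/
def IsPureCfgID {M : IDModel A T} (c : ConfigID M) (a : A) : Prop :=
  ∀ t ∈ c.supp, ∀ t' ∈ c.supp,
    (M.q (M.lvl t) (M.lvl t') + M.q (M.lvl t') (M.lvl t) < 1 → c.bN t t' = pureStrat a) ∧
    (0 < M.q (M.lvl t) (M.lvl t') → c.bD t t' = pureStrat a)

/-- The pure maxmin value `M̲`. -/
def maxminID (M : IDModel A T) [Nonempty A] : ℝ :=
  Finset.univ.sup' Finset.univ_nonempty fun a =>
    Finset.univ.inf' Finset.univ_nonempty fun a' => M.π a a'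

/-- The pure minmax value `M̄`. -/
def minmaxID (M : IDModel A T) [Nonempty A] : ℝ :=
  Finset.univ.inf' Finset.univ_nonempty fun a' =>
    Finset.univ.sup' Finset.univ_nonempty fun a => M.π a a'

/-- The deviation gain of action `a`. -/
def devGainID (M : IDModel A T) [Nonempty A] (a : A) : ℝ :=
  (Finset.univ.sup' Finset.univ_nonempty fun a' => M.π a' a) - M.π a a

/-- The effective cost of deceiving cognitive level `n`:
`c(n) = min_{m > n} (k_m − k_n)/q(m,n)`. -/
def effCostID (M : IDModel A T) (n : ℕ+) : ℝ :=
  ⨅ m : { m : ℕ+ // n < m }, (M.k m.1 - M.k n) / M.q m.1 n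

/-- The Hawk-Dove game: `H = 0`, `D = 1`. -/
def hd (g l : ℝ) : Fin 2 → Fin 2 → ℝ := fun a a' =>
  if a = 0 then (if a' = 0 then 0 else 1 + g) else (if a' = 0 then 1 - l else 1)

/-! ### Auxiliary lemmas for `stmt14` -/

section Stmt14Aux

open Finset

lemma mixed_sum2 (σ : Mixed (Fin 2)) : σ.1 0 + σ.1 1 = 1 := by
  have h := σ.2.2; rwa [Fin.sum_univ_two] at h

lemma mixed_nn (σ : Mixed (Fin 2)) (a : Fin 2) : 0 ≤ σ.1 a := σ.2.1 a

lemma mixed_le_one (σ : Mixed (Fin 2)) (a : Fin 2) : σ.1 a ≤ 1 := by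
  have h := mixed_sum2 σ
  have h0 := σ.2.1 0
  have h1 := σ.2.1 1
  fin_cases a
  · show σ.1 0 ≤ 1; linarith
  · show σ.1 1 ≤ 1; linarith

@[simp] lemma pure0_app0 : (pureStrat (0 : Fin 2)).1 0 = 1 := by simp [pureStrat]
@[simp] lemma pure0_app1 : (pureStrat (0 : Fin 2)).1 1 = 0 := by simp [pureStrat]
@[simp] lemma pure1_app0 : (pureStrat (1 : Fin 2)).1 0 = 0 := by simp [pureStrat]
@[simp] lemma pure1_app1 : (pureStrat (1 : Fin 2)).1 1 = 1 := by simp [pureStrat]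

lemma eq_pure0 (σ : Mixed (Fin 2)) (h : σ.1 0 = 1) : σ = pureStrat 0 := by
  have hs := mixed_sum2 σ
  apply Subtype.ext; funext b
  fin_cases b
  · simpa using h
  · show σ.1 1 = (pureStrat (0:Fin 2)).1 1
    rw [pure0_app1]; linarith

lemma eq_pure1 (σ : Mixed (Fin 2)) (h : σ.1 1 = 1) : σ = pureStrat 1 := by
  have hs := mixed_sum2 σ
  apply Subtype.ext; funext b
  fin_cases b
  · show σ.1 0 = (pureStrat (1:Fin 2)).1 0
    rw [pure1_app0]; linarith
  · simpa using h

lemma exPay_two (f : Fin 2 → Fin 2 → ℝ) (σ τ : Mixed (Fin 2)) :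
    exPay f σ τ = σ.1 0 * τ.1 0 * f 0 0 + σ.1 0 * τ.1 1 * f 0 1
      + σ.1 1 * τ.1 0 * f 1 0 + σ.1 1 * τ.1 1 * f 1 1 := by
  simp [exPay, Fin.sum_univ_two]; ring

variable {g l : ℝ}

lemma hd00 : hd g l 0 0 = 0 := by simp [hd]
lemma hd01 : hd g l 0 1 = 1 + g := by simp [hd]
lemma hd10 : hd g l 1 0 = 1 - l := by simp [hd]
lemma hd11 : hd g l 1 1 = 1 := by simp [hd]

lemma exPay_hd (σ τ : Mixed (Fin 2)) :
    exPay (hd g l) σ τ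
      = σ.1 0 * τ.1 1 * (1 + g) + σ.1 1 * τ.1 0 * (1 - l) + σ.1 1 * τ.1 1 := by
  rw [exPay_two, hd00, hd01, hd10, hd11]; ring

lemma exPay_hd_pp01 : exPay (hd g l) (pureStrat 0) (pureStrat 1) = 1 + g := by
  rw [exPay_hd]; simp

lemma exPay_hd_pp10 : exPay (hd g l) (pureStrat 1) (pureStrat 0) = 1 - l := by
  rw [exPay_hd]; simp

lemma exPay_hd_pp00 : exPay (hd g l) (pureStrat 0) (pureStrat 0) = 0 := by
  rw [exPay_hd]; simp

lemma exPay_hd_pp11 : exPay (hd g l) (pureStrat 1) (pureStrat 1) = 1 := by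
  rw [exPay_hd]; simp

lemma exPay_hd_le (hg : 0 < g) (hl0 : 0 < l) (σ τ : Mixed (Fin 2)) :
    exPay (hd g l) σ τ ≤ 1 + g := by
  have e := exPay_hd (g := g) (l := l) σ τ
  have h1 := mixed_sum2 σ; have h2 := mixed_sum2 τ
  have a0 := σ.2.1 0; have a1 := σ.2.1 1
  have b0 := τ.2.1 0; have b1 := τ.2.1 1
  have hh : (σ.1 0 + σ.1 1) * (τ.1 0 + τ.1 1) = 1 := by rw [h1, h2]; ring
  nlinarith [mul_nonneg a0 b0, mul_nonneg a1 b0, mul_nonneg a1 b1,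
    mul_nonneg a0 b1, hh]

lemma exPay_hd_pure0_right (σ : Mixed (Fin 2)) :
    exPay (hd g l) σ (pureStrat 0) = σ.1 1 * (1 - l) := by
  rw [exPay_hd]; simp

lemma exPay_hd_pure0_right_le (hl1 : l < 1) (σ : Mixed (Fin 2)) :
    exPay (hd g l) σ (pureStrat 0) ≤ 1 - l := by
  rw [exPay_hd_pure0_right]
  have := mixed_le_one σ 1
  nlinarith

lemma exPay_hd_pair_le (hgl : l ≤ g) (σ τ : Mixed (Fin 2)) :
    exPay (hd g l) σ τ + exPay (hd g l) τ σ ≤ 2 + g - l := by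
  have e1 := exPay_hd (g := g) (l := l) σ τ
  have e2 := exPay_hd (g := g) (l := l) τ σ
  have h1 := mixed_sum2 σ; have h2 := mixed_sum2 τ
  have a0 := σ.2.1 0; have a1 := σ.2.1 1
  have b0 := τ.2.1 0; have b1 := τ.2.1 1
  have hh : (σ.1 0 + σ.1 1) * (τ.1 0 + τ.1 1) = 1 := by rw [h1, h2]; ring
  nlinarith [mul_nonneg a0 b0, mul_nonneg a1 b1, mul_nonneg a0 b1, mul_nonneg a1 b0, hh]

lemma exPay_hd_diag_le (hgl : l ≤ g) (σ : Mixed (Fin 2)) :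
    exPay (hd g l) σ σ ≤ 1 + (g - l)/4 := by
  have e := exPay_hd (g := g) (l := l) σ σ
  have h1 := mixed_sum2 σ
  have a0 := σ.2.1 0; have a1 := σ.2.1 1
  have hh : (σ.1 0 + σ.1 1) * (σ.1 0 + σ.1 1) = 1 := by rw [h1]; ring
  nlinarith [sq_nonneg (σ.1 0 - σ.1 1), sq_nonneg (σ.1 0), mul_nonneg a0 a1, hh]

lemma exPay_hd_max_pin (hg : 0 < g) (hl0 : 0 < l) (σ τ : Mixed (Fin 2))
    (h : exPay (hd g l) σ τ = 1 + g) : σ = pureStrat 0 ∧ τ = pureStrat 1 := by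
  have e := exPay_hd (g := g) (l := l) σ τ
  have h1 := mixed_sum2 σ; have h2 := mixed_sum2 τ
  have a0 := σ.2.1 0; have a1 := σ.2.1 1
  have b0 := τ.2.1 0; have b1 := τ.2.1 1
  have hh : (σ.1 0 + σ.1 1) * (τ.1 0 + τ.1 1) = 1 := by rw [h1, h2]; ring
  have key : σ.1 0 * τ.1 0 * (1+g) + σ.1 1 * τ.1 0 * (g+l) + σ.1 1 * τ.1 1 * g = 0 := by
    nlinarith [hh]
  have n1 : 0 ≤ σ.1 0 * τ.1 0 * (1+g) := by positivity
  have n2 : 0 ≤ σ.1 1 * τ.1 0 * (g+l) := by positivity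
  have n3 : 0 ≤ σ.1 1 * τ.1 1 * g := by positivity
  have e1 : σ.1 0 * τ.1 0 = 0 := by
    have : σ.1 0 * τ.1 0 * (1+g) = 0 := by linarith
    rcases mul_eq_zero.1 this with h' | h'
    · exact h'
    · linarith
  have e2 : σ.1 1 * τ.1 0 = 0 := by
    have : σ.1 1 * τ.1 0 * (g+l) = 0 := by linarith
    rcases mul_eq_zero.1 this with h' | h'
    · exact h'
    · linarith
  have e3 : σ.1 1 * τ.1 1 = 0 := by
    have : σ.1 1 * τ.1 1 * g = 0 := by linarith
    rcases mul_eq_zero.1 this with h' | h'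
    · exact h'
    · linarith
  have hτ0 : τ.1 0 = 0 := by
    have h' := congrArg (fun x : ℝ => x * τ.1 0) h1
    simp only [add_mul, one_mul] at h'
    linarith
  have hτ : τ = pureStrat 1 := eq_pure1 τ (by linarith)
  have hσ1 : σ.1 1 = 0 := by
    have hτ1 : τ.1 1 = 1 := by linarith
    rw [hτ1, mul_one] at e3; exact e3
  exact ⟨eq_pure0 σ (by linarith), hτ⟩

lemma exPay_hd_pure0_pin (hl1 : l < 1) (σ : Mixed (Fin 2))
    (h : exPay (hd g l) σ (pureStrat 0) = 1 - l) : σ = pureStrat 1 := by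
  rw [exPay_hd_pure0_right] at h
  apply eq_pure1
  have hne : (1 : ℝ) - l ≠ 0 := by linarith
  have h' : σ.1 1 * (1 - l) = 1 * (1 - l) := by linarith
  exact mul_right_cancel₀ hne h'

end Stmt14Aux

/-- Existence of equilibrium weights for the discrete war-of-attrition-like type game. -/
lemma stmt14_weights (g l : ℝ) (hg : 0 < g) (hl0 : 0 < l)
    (K : ℕ → ℝ) (Nn : ℕ) (hN : 1 ≤ Nn) (hK0 : K 0 = 0) (hKmono : Monotone K)
    (hNtop : g + l < K Nn)
    (hmarg : ∀ i, i < Nn → K (i+1) - K i < g) :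
    ∃ (x : ℕ → ℝ) (V : ℝ),
      (∀ i, 0 ≤ x i) ∧ (∀ i, Nn ≤ i → x i = 0) ∧
      (∑ i ∈ Finset.range Nn, x i) = 1 ∧ 0 ≤ V ∧
      (∀ i, 0 < x i →
        (g+l) * (∑ j ∈ Finset.range i, x j) + l * x i - K i = V) ∧
      (∀ i, (g+l) * (∑ j ∈ Finset.range i, x j) - K i ≤ V) ∧
      2 ≤ ((Finset.range Nn).filter (fun i => 0 < x i)).card := by
  classical
  have hβpos : (0:ℝ) < g + l := by positivity
  have hKnn : ∀ i, 0 ≤ K i := fun i => hK0 ▸ hKmono (Nat.zero_le i)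
  obtain ⟨Z, Z0, Zs⟩ : ∃ Z : ℕ → ℝ → ℝ, (∀ V, Z 0 V = 0) ∧
      (∀ j V, Z (j+1) V
        = max (Z j V) ((g + l - K (Nn - (j+1)) - V - l * Z j V)/g)) :=
    ⟨fun j => Nat.rec (fun _ => 0)
      (fun j' Zj V => max (Zj V) ((g + l - K (Nn - (j'+1)) - V - l * Zj V)/g)) j,
      fun _ => rfl, fun _ _ => rfl⟩
  have Znn : ∀ j V, 0 ≤ Z j V := by
    intro j V
    induction j with
    | zero => simp [Z0]
    | succ j ih => rw [Zs]; exact le_trans ih (le_max_left _ _)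
  have Zcont : ∀ j, Continuous fun V => Z j V := by
    intro j
    induction j with
    | zero => simpa [Z0] using continuous_const
    | succ j ih =>
      simp only [Zs]
      exact ih.max ((((continuous_const.sub continuous_id).sub
        (continuous_const.mul ih))).div_const g)
  have Zlow : ∀ V, 0 ≤ V → ∀ j, g + l - K (Nn - j) - V ≤ (g + l) * Z j V := by
    intro V hV j
    induction j with
    | zero =>
      simp only [Nat.sub_zero, Z0, mul_zero]
      linarith
    | succ j ih =>
      rw [Zs]
      rcases le_or_gt (g + l - K (Nn - (j+1)) - V) ((g + l) * Z j V) with h | h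
      · calc g + l - K (Nn - (j+1)) - V ≤ (g+l) * Z j V := h
        _ ≤ (g+l) * max (Z j V) ((g + l - K (Nn - (j+1)) - V - l * Z j V)/g) :=
            mul_le_mul_of_nonneg_left (le_max_left _ _) hβpos.le
      · have h2 : Z j V ≤ (g + l - K (Nn - (j+1)) - V - l * Z j V)/g := by
          rw [le_div_iff₀ hg]
          nlinarith
        rw [max_eq_right h2]
        rw [← mul_div_assoc, le_div_iff₀ hg]
        nlinarith
  have Ztop : ∀ j, Z j (g + l) = 0 := by
    intro j
    induction j with
    | zero => exact Z0 _
    | succ j ih =>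
      rw [Zs, ih]
      have h : (g + l - K (Nn - (j+1)) - (g+l) - l * 0)/g ≤ 0 := by
        apply div_nonpos_of_nonpos_of_nonneg _ hg.le
        have := hKnn (Nn - (j+1)); linarith
      simpa using max_eq_left h
  have hF0 : 1 ≤ Z Nn 0 := by
    have h := Zlow 0 le_rfl Nn
    simp only [Nat.sub_self, hK0, sub_zero] at h
    by_contra hcon
    push_neg at hcon
    nlinarith
  have hIVT : ∃ V ∈ Set.Icc (0:ℝ) (g+l), Z Nn V = 1 := by
    have hcont : ContinuousOn (fun V => Z Nn V) (Set.Icc 0 (g+l)) :=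
      (Zcont Nn).continuousOn
    have hsub := intermediate_value_Icc' (le_of_lt hβpos) hcont
    have h1 : (1:ℝ) ∈ Set.Icc (Z Nn (g+l)) (Z Nn 0) := by
      constructor
      · rw [Ztop Nn]; norm_num
      · exact hF0
    obtain ⟨V, hV, hV1⟩ := hsub h1
    exact ⟨V, hV, hV1⟩
  obtain ⟨V, hVmem, hVeq⟩ := hIVT
  have hV0 : 0 ≤ V := hVmem.1
  set zs : ℕ → ℝ := fun i => Z (Nn - i) V with hzs
  have zs0 : zs 0 = 1 := by simpa [hzs] using hVeq
  have zs_ge : ∀ i, Nn ≤ i → zs i = 0 := by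
    intro i hi; simp [hzs, Nat.sub_eq_zero_of_le hi, Z0]
  have zs_step : ∀ i, i < Nn →
      zs i = max (zs (i+1)) ((g + l - K i - V - l * zs (i+1))/g) := by
    intro i hi
    have h1 : Nn - i = (Nn - (i+1)) + 1 := by omega
    have h2 : Nn - ((Nn - (i+1)) + 1) = i := by omega
    calc zs i = Z ((Nn - (i+1)) + 1) V := by rw [hzs]; simp only; rw [h1]
    _ = max (Z (Nn - (i+1)) V)
        ((g + l - K (Nn - ((Nn - (i+1)) + 1)) - V - l * Z (Nn - (i+1)) V)/g) := Zs _ _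
    _ = _ := by rw [h2]
  have zs_nn : ∀ i, 0 ≤ zs i := fun i => Znn _ _
  have zs_anti : ∀ i, zs (i+1) ≤ zs i := by
    intro i
    rcases lt_or_ge i Nn with h | h
    · rw [zs_step i h]; exact le_max_left _ _
    · rw [zs_ge i h, zs_ge (i+1) (le_trans h (Nat.le_succ i))]
  have zs_le_one : ∀ i, zs i ≤ 1 := by
    intro i
    have h : ∀ j, zs j ≤ zs 0 := by
      intro j
      induction j with
      | zero => exact le_refl _
      | succ j ih => exact le_trans (zs_anti j) ih
    rw [← zs0]; exact h i
  have zsGE : ∀ i, i < Nn → g + l - K i - V ≤ g * zs i + l * zs (i+1) := by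
    intro i hi
    have h := zs_step i hi
    have h2 : (g + l - K i - V - l * zs (i+1))/g ≤ zs i := by
      conv_rhs => rw [h]
      exact le_max_right _ _
    rw [div_le_iff₀ hg] at h2
    linarith
  have zsEQ : ∀ i, i < Nn → zs (i+1) < zs i →
      g * zs i + l * zs (i+1) = g + l - K i - V := by
    intro i hi hlt
    have h := zs_step i hi
    rcases max_choice (zs (i+1)) ((g + l - K i - V - l * zs (i+1))/g) with h' | h'
    · rw [h'] at h; rw [h] at hlt; exact absurd hlt (lt_irrefl _)
    · rw [h'] at h
      rw [eq_div_iff (ne_of_gt hg)] at h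
      linarith
  have hcn : ∀ i, (∑ j ∈ Finset.range i, (zs j - zs (j+1))) = 1 - zs i := by
    intro i; rw [Finset.sum_range_sub' (fun j => zs j), zs0]
  have htot : (∑ i ∈ Finset.range Nn, (zs i - zs (i+1))) = 1 := by
    rw [hcn, zs_ge Nn le_rfl]; ring
  refine ⟨fun i => zs i - zs (i+1), V, ?_, ?_, htot, hV0, ?_, ?_, ?_⟩
  · intro i; show 0 ≤ zs i - zs (i+1); have := zs_anti i; linarith
  · intro i hi
    show zs i - zs (i+1) = 0
    rw [zs_ge i hi, zs_ge (i+1) (le_trans hi (Nat.le_succ i))]; ring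
  · intro i hx
    replace hx : 0 < zs i - zs (i+1) := hx
    have hi : i < Nn := by
      by_contra h
      push_neg at h
      rw [zs_ge i h, zs_ge (i+1) (le_trans h (Nat.le_succ i))] at hx
      simp at hx
    show (g+l) * (∑ j ∈ Finset.range i, (zs j - zs (j+1))) + l * (zs i - zs (i+1)) - K i = V
    rw [hcn]
    have h := zsEQ i hi (by linarith)
    nlinarith [h]
  · intro i
    show (g+l) * (∑ j ∈ Finset.range i, (zs j - zs (j+1))) - K i ≤ V
    rw [hcn]
    rcases lt_or_ge i Nn with h | h
    · have h1 := zsGE i h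
      have h2 := zs_anti i
      nlinarith [mul_le_mul_of_nonneg_left h2 hl0.le]
    · rw [zs_ge i h]
      have hKi : K Nn ≤ K i := hKmono h
      nlinarith
  · -- at least two support points
    by_contra hcard
    push_neg at hcard
    set S := ((Finset.range Nn).filter (fun i => 0 < zs i - zs (i+1))) with hSdef
    have hne : S.Nonempty := by
      rw [Finset.nonempty_iff_ne_empty]
      intro hemp
      have hzero : (∑ i ∈ Finset.range Nn, (zs i - zs (i+1))) = 0 := by
        apply Finset.sum_eq_zero
        intro i hi
        by_contra hxi
        have hpos : 0 < zs i - zs (i+1) :=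
          lt_of_le_of_ne (by linarith [zs_anti i]) (Ne.symm hxi)
        have hmem : i ∈ S := by
          rw [hSdef, Finset.mem_filter]; exact ⟨hi, hpos⟩
        rw [hemp] at hmem
        simp at hmem
      rw [htot] at hzero
      norm_num at hzero
    have hone : S.card = 1 :=
      le_antisymm (by omega) (Finset.Nonempty.card_pos hne)
    obtain ⟨b, hb⟩ := Finset.card_eq_one.mp hone
    have hbmem : b ∈ S := by rw [hb]; exact Finset.mem_singleton_self b
    rw [hSdef, Finset.mem_filter, Finset.mem_range] at hbmem
    obtain ⟨hblt, hbpos⟩ := hbmem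
    have hxb : zs b - zs (b+1) = 1 := by
      have := Finset.sum_eq_single_of_mem b (Finset.mem_range.mpr hblt)
        (f := fun i => zs i - zs (i+1)) ?_
      · rw [htot] at this
        replace this : 1 = zs b - zs (b+1) := this
        linarith
      · intro i hi hne'
        show zs i - zs (i+1) = 0
        by_contra hxi
        have hpos : 0 < zs i - zs (i+1) :=
          lt_of_le_of_ne (by linarith [zs_anti i]) (Ne.symm hxi)
        have hmem : i ∈ S := by
          rw [hSdef, Finset.mem_filter]; exact ⟨hi, hpos⟩
        rw [hb, Finset.mem_singleton] at hmem
        exact hne' hmem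
    have hzb : zs b = 1 := le_antisymm (zs_le_one b) (by linarith [zs_nn (b+1)])
    have hzb1 : zs (b+1) = 0 := by linarith [zs_nn (b+1), zs_le_one b]
    have hVval : V = l - K b := by
      have h := zsEQ b hblt (by linarith)
      rw [hzb, hzb1] at h
      linarith
    rcases lt_or_eq_of_le (Nat.succ_le_of_lt hblt) with h | h
    · -- b + 1 < Nn
      have h1 := zsGE (b+1) h
      have hzb2 : zs (b+2) = 0 :=
        le_antisymm (hzb1 ▸ zs_anti (b+1)) (zs_nn (b+2))
      rw [hzb1, hzb2] at h1
      have := hmarg b hblt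
      nlinarith
    · -- b + 1 = Nn
      have hKb1 : K (b+1) = K Nn := by rw [← h]
      have := hmarg b hblt
      rw [hKb1] at this
      nlinarith

section Stmt14Model

variable {T : Type} {M : IDModel (Fin 2) T}

lemma q_zero_of_not_lt {n n' : ℕ+} (h : ¬ n' < n) : M.q n n' = 0 :=
  le_antisymm (by
    by_contra hc
    push_neg at hc
    exact h ((M.q_pos_iff n n').1 (lt_of_le_of_ne (M.q_nonneg n n') (by
      intro he; exact hc.not_ge (le_of_eq he.symm) ) |>.trans_le (le_refl _)))) (M.q_nonneg n n')

lemma qsum_one (hq : ∀ n n' : ℕ+, n' < n → M.q n n' = 1) {n n' : ℕ+} (h : n' < n) :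
    M.q n n' + M.q n' n = 1 := by
  rw [hq n n' h, q_zero_of_not_lt (by exact fun hc => absurd h (not_lt_of_gt hc))]
  ring

lemma qsum_zero {n : ℕ+} : M.q n n + M.q n n = 0 := by
  rw [q_zero_of_not_lt (lt_irrefl n)]; ring

variable {t : ℕ+ → T}

lemma t_inj (hlvl : ∀ n : ℕ+, M.lvl (t n) = n) {a b : ℕ+} (h : t a = t b) : a = b := by
  have := congrArg M.lvl h
  rwa [hlvl, hlvl] at this

section Util

variable (hutil : ∀ (n : ℕ+) (a a' : Fin 2) (t' : T), M.util (t n) a a' t' =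
      if (t' = t n ∧ a = 1) ∨ (t' ≠ t n ∧ a = 0) then 1 else 0)

include hutil

lemma exPay_u_self (n : ℕ+) (σ σ' : Mixed (Fin 2)) :
    exPay (M.u (t n) (t n)) σ σ' = σ.1 1 := by
  have h00 : M.u (t n) (t n) 0 0 = 0 := by simp [IDModel.u, hutil]
  have h01 : M.u (t n) (t n) 0 1 = 0 := by simp [IDModel.u, hutil]
  have h10 : M.u (t n) (t n) 1 0 = 1 := by simp [IDModel.u, hutil]
  have h11 : M.u (t n) (t n) 1 1 = 1 := by simp [IDModel.u, hutil]
  rw [exPay_two, h00, h01, h10, h11]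
  linear_combination σ.1 1 * (mixed_sum2 σ')

lemma exPay_u_other (n : ℕ+) {τ : T} (hτ : τ ≠ t n) (σ σ' : Mixed (Fin 2)) :
    exPay (M.u (t n) τ) σ σ' = σ.1 0 := by
  have h00 : M.u (t n) τ 0 0 = 1 := by simp [IDModel.u, hutil, hτ]
  have h01 : M.u (t n) τ 0 1 = 1 := by simp [IDModel.u, hutil, hτ]
  have h10 : M.u (t n) τ 1 0 = 0 := by simp [IDModel.u, hutil, hτ]
  have h11 : M.u (t n) τ 1 1 = 0 := by simp [IDModel.u, hutil, hτ]
  rw [exPay_two, h00, h01, h10, h11]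
  linear_combination σ.1 0 * (mixed_sum2 σ')

lemma mem_BRID_self_iff (n : ℕ+) (σ' : Mixed (Fin 2)) (σ : Mixed (Fin 2)) :
    σ ∈ BRID M (t n) σ' (t n) ↔ σ = pureStrat 1 := by
  constructor
  · intro h
    have h1 := h (pureStrat 1)
    rw [exPay_u_self hutil, exPay_u_self hutil] at h1
    simp at h1
    exact eq_pure1 σ (le_antisymm (mixed_le_one σ 1) h1)
  · intro h τ
    rw [exPay_u_self hutil, exPay_u_self hutil, h]
    simpa using mixed_le_one τ 1

lemma mem_BRID_other_iff (n : ℕ+) {τ : T} (hτ : τ ≠ t n) (σ' : Mixed (Fin 2))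
    (σ : Mixed (Fin 2)) : σ ∈ BRID M (t n) σ' τ ↔ σ = pureStrat 0 := by
  constructor
  · intro h
    have h1 := h (pureStrat 0)
    rw [exPay_u_other hutil n hτ, exPay_u_other hutil n hτ] at h1
    simp at h1
    exact eq_pure0 σ (le_antisymm (mixed_le_one σ 0) h1)
  · intro h τ'
    rw [exPay_u_other hutil n hτ, exPay_u_other hutil n hτ, h]
    simpa using mixed_le_one τ' 0

lemma undom_theta (hlvl : ∀ n : ℕ+, M.lvl (t n) = n) (n : ℕ+) :
    UndomID M (t n) = {pureStrat 0, pureStrat 1} := by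
  ext σ
  constructor
  · rintro ⟨σ', t', h⟩
    by_cases ht' : t' = t n
    · subst ht'
      rw [mem_BRID_self_iff hutil] at h
      exact Or.inr h
    · rw [mem_BRID_other_iff hutil n ht'] at h
      exact Or.inl h
  · rintro (h | h)
    · refine ⟨pureStrat 0, t (n+1), ?_⟩
      rw [mem_BRID_other_iff hutil n (fun hc => by
        have h2 := t_inj hlvl hc
        have h3 : ((n:ℕ) + 1 : ℕ) = (n:ℕ) := by exact_mod_cast h2
        omega)]
      exact h
    · exact ⟨pureStrat 0, t n, (mem_BRID_self_iff hutil n _ σ).2 h⟩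

lemma NEID_self_pin (n : ℕ+) {p p' : Mixed (Fin 2)}
    (h : (p, p') ∈ NEID M (t n) (t n)) : p = pureStrat 1 ∧ p' = pureStrat 1 := by
  obtain ⟨h1, h2⟩ := h
  exact ⟨(mem_BRID_self_iff hutil n _ p).1 h1, (mem_BRID_self_iff hutil n _ p').1 h2⟩

lemma NEID_self_mem (n : ℕ+) : ((pureStrat 1, pureStrat 1) : Mixed (Fin 2) × Mixed (Fin 2))
    ∈ NEID M (t n) (t n) :=
  ⟨(mem_BRID_self_iff hutil n _ _).2 rfl, (mem_BRID_self_iff hutil n _ _).2 rfl⟩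

/-- In any Nash equilibrium against a different type, the discriminating type plays Hawk. -/
lemma NEID_theta_vs_pin (n : ℕ+) {τ : T} (hτ : τ ≠ t n) {p p' : Mixed (Fin 2)}
    (h : (p, p') ∈ NEID M (t n) τ) : p = pureStrat 0 :=
  (mem_BRID_other_iff hutil n hτ _ p).1 h.1

lemma NEID_vs_theta_pin (n : ℕ+) {τ : T} (hτ : τ ≠ t n) {p p' : Mixed (Fin 2)}
    (h : (p, p') ∈ NEID M τ (t n)) : p' = pureStrat 0 :=
  (mem_BRID_other_iff hutil n hτ _ p').1 h.2

/-- A discriminating type deceiving anyone plays Hawk. -/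
lemma DEID_theta_deceiver_pin (n : ℕ+) {τ : T} (hτ : τ ≠ t n) {p p' : Mixed (Fin 2)}
    (h : (p, p') ∈ DEID M (t n) τ) : p = pureStrat 0 := by
  obtain ⟨hund, hmax⟩ := h
  have h1 := hmax (pureStrat 0) p' hund
  rw [exPay_u_other hutil n hτ, exPay_u_other hutil n hτ] at h1
  simp at h1
  exact eq_pure0 p (le_antisymm (mixed_le_one p 0) h1)

lemma DEID_theta_mem (hlvl : ∀ n : ℕ+, M.lvl (t n) = n) {n m : ℕ+} (hnm : m ≠ n) :
    ((pureStrat 0, pureStrat 1) : Mixed (Fin 2) × Mixed (Fin 2)) ∈ DEID M (t n) (t m) := by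
  have htne : (t m : T) ≠ t n := fun hc => hnm (t_inj hlvl hc)
  constructor
  · rw [undom_theta hutil hlvl m]
    exact Or.inr rfl
  · intro σ σ' hσ'
    rw [exPay_u_other hutil n htne, exPay_u_other hutil n htne]
    simpa using mixed_le_one σ 0

lemma DEID_deceived_theta (hlvl : ∀ n : ℕ+, M.lvl (t n) = n) (m : ℕ+) {τ : T}
    {p p' : Mixed (Fin 2)} (h : (p, p') ∈ DEID M τ (t m)) :
    p' = pureStrat 0 ∨ p' = pureStrat 1 := by
  have := h.1
  rw [undom_theta hutil hlvl m] at this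
  exact this

end Util

lemma condFit_of_lvl_lt (hq : ∀ n n' : ℕ+, n' < n → M.q n n' = 1)
    (c : ConfigID M) {a b : T} (h : M.lvl b < M.lvl a) :
    condFitID c a b = exPay M.π (c.bD a b) (c.bD b a) := by
  unfold condFitID
  rw [hq _ _ h, q_zero_of_not_lt (not_lt_of_gt h)]
  ring

lemma condFit_of_lvl_lt' (hq : ∀ n n' : ℕ+, n' < n → M.q n n' = 1)
    (c : ConfigID M) {a b : T} (h : M.lvl a < M.lvl b) :
    condFitID c a b = exPay M.π (c.bD a b) (c.bD b a) := by
  unfold condFitID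
  rw [hq _ _ h, q_zero_of_not_lt (not_lt_of_gt h)]
  ring

lemma condFit_of_lvl_eq (c : ConfigID M) {a b : T} (h : M.lvl a = M.lvl b) :
    condFitID c a b = exPay M.π (c.bN a b) (c.bN b a) := by
  unfold condFitID
  rw [h, q_zero_of_not_lt (lt_irrefl _)]
  ring

lemma condFit_pair_le {g l : ℝ} (hpi : M.π = hd g l) (hgl : l ≤ g)
    (hq : ∀ n n' : ℕ+, n' < n → M.q n n' = 1) (c : ConfigID M) (a b : T) :
    condFitID c a b + condFitID c b a ≤ 2 + g - l := by
  rcases lt_trichotomy (M.lvl a) (M.lvl b) with h | h | h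
  · rw [condFit_of_lvl_lt' hq c h, condFit_of_lvl_lt hq c h, hpi]
    have := exPay_hd_pair_le (g := g) (l := l) hgl (c.bD a b) (c.bD b a)
    linarith
  · rw [condFit_of_lvl_eq c h, condFit_of_lvl_eq c h.symm, hpi]
    have := exPay_hd_pair_le (g := g) (l := l) hgl (c.bN a b) (c.bN b a)
    linarith
  · rw [condFit_of_lvl_lt hq c h, condFit_of_lvl_lt' hq c h, hpi]
    have := exPay_hd_pair_le (g := g) (l := l) hgl (c.bD a b) (c.bD b a)
    linarith

lemma condFit_diag_le {g l : ℝ} (hpi : M.π = hd g l) (hgl : l ≤ g)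
    (c : ConfigID M) (a : T) :
    condFitID c a a ≤ 1 + (g - l)/4 := by
  rw [condFit_of_lvl_eq c rfl, hpi]
  exact exPay_hd_diag_le hgl (c.bN a a)

end Stmt14Model

section Stmt14Finsupp

variable {T : Type}

lemma playTID_eq_sum (F : T → T → ℝ) (a b : T →₀ ℝ) (X Y : Finset T)
    (hA : a.support ⊆ X) (hB : b.support ⊆ Y) :
    playTID F a b = ∑ t ∈ X, ∑ t' ∈ Y, a t * b t' * F t t' := by
  unfold playTID
  have h1 : ∀ t : T, (∑ t' ∈ b.support, a t * b t' * F t t')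
      = ∑ t' ∈ Y, a t * b t' * F t t' := by
    intro t
    apply Finset.sum_subset hB
    intro t' _ ht'
    rw [Finsupp.notMem_support_iff.1 ht']
    ring
  rw [Finset.sum_congr rfl (fun t _ => h1 t)]
  apply Finset.sum_subset hA
  intro t _ ht
  apply Finset.sum_eq_zero
  intro t' _
  rw [Finsupp.notMem_support_iff.1 ht]
  ring

lemma mix_apply (a b : T →₀ ℝ) (s e : ℝ) (τ : T) :
    (s • a + e • b) τ = s * a τ + e * b τ := by
  simp [Finsupp.add_apply, Finsupp.smul_apply, smul_eq_mul]

lemma mix_support_subset (a b : T →₀ ℝ) (s e : ℝ) :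
    (s • a + e • b).support ⊆ a.support ∪ b.support :=
  subset_trans Finsupp.support_add
    (Finset.union_subset_union Finsupp.support_smul Finsupp.support_smul)

lemma distid_sum_over (ν : DistID T) (P : Finset T) (h : ν.w.support ⊆ P) :
    ∑ τ ∈ P, ν.w τ = 1 := by
  rw [← Finset.sum_subset h (fun τ _ hτ => Finsupp.notMem_support_iff.1 hτ)]
  exact ν.total

lemma distid_le_one (ν : DistID T) (τ : T) : ν.w τ ≤ 1 := by
  by_cases h : τ ∈ ν.w.support
  · calc ν.w τ ≤ ∑ τ' ∈ ν.w.support, ν.w τ' :=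
      Finset.single_le_sum (fun i _ => ν.nonneg i) h
    _ = 1 := ν.total
  · rw [Finsupp.notMem_support_iff.1 h]; norm_num

variable {ι : Type*} (S : Finset ι) (θ : ι → T) (x : ι → ℝ)

lemma finsum_single_apply_mem (hinj : Function.Injective θ) {j : ι} (hj : j ∈ S) :
    (∑ i ∈ S, Finsupp.single (θ i) (x i)) (θ j) = x j := by
  rw [Finsupp.finset_sum_apply]
  rw [Finset.sum_eq_single_of_mem j hj]
  · simp
  · intro i _ hne
    rw [Finsupp.single_apply, if_neg (fun hc => hne (hinj hc))]

lemma finsum_single_apply_notmem {τ : T} (h : ∀ i ∈ S, θ i ≠ τ) :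
    (∑ i ∈ S, Finsupp.single (θ i) (x i)) τ = 0 := by
  rw [Finsupp.finset_sum_apply]
  apply Finset.sum_eq_zero
  intro i hi
  rw [Finsupp.single_apply, if_neg (h i hi)]

lemma finsum_single_support_eq (hinj : Function.Injective θ)
    (hx : ∀ i ∈ S, x i ≠ 0) :
    (∑ i ∈ S, Finsupp.single (θ i) (x i)).support = S.image θ := by
  ext τ
  rw [Finsupp.mem_support_iff]
  constructor
  · intro h
    by_contra hc
    apply h
    apply finsum_single_apply_notmem
    intro i hi hne
    exact hc (Finset.mem_image.2 ⟨i, hi, hne⟩)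
  · rintro h
    obtain ⟨i, hi, rfl⟩ := Finset.mem_image.1 h
    rw [finsum_single_apply_mem S θ x hinj hi]
    exact hx i hi

end Stmt14Finsupp

section Stmt14MainCons

/-- Main construction: the stable configuration for `l ≤ g`. -/
lemma stmt14_main {T : Type} (g l : ℝ) (hg : 0 < g) (hl0 : 0 < l) (hl1 : l < 1)
    (hgl : l ≤ g)
    (M : IDModel (Fin 2) T) (hpi : M.π = hd g l)
    (hq : ∀ n n' : ℕ+, n' < n → M.q n n' = 1)
    (N : ℕ+) (hN1 : M.k N ≤ l + g) (hN2 : l + g < M.k (N + 1))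
    (hmarg : ∀ n : ℕ+, n ≤ N → M.k (n + 1) - M.k n < g)
    (t : ℕ+ → T) (hlvl : ∀ n : ℕ+, M.lvl (t n) = n)
    (hutil : ∀ (n : ℕ+) (a a' : Fin 2) (t' : T), M.util (t n) a a' t' =
      if (t' = t n ∧ a = 1) ∨ (t' ≠ t n ∧ a = 0) then 1 else 0) :
    ∃ c : ConfigID M,
      (∀ θ ∈ c.supp, ∃ n : ℕ+, n ≤ N ∧ θ = t n) ∧ 1 < c.supp.card ∧
      (∀ θ ∈ c.supp, ∀ θ' ∈ c.supp,
        (M.lvl θ' < M.lvl θ →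
          c.bD θ θ' = pureStrat (0 : Fin 2) ∧ c.bD θ' θ = pureStrat (1 : Fin 2)) ∧
        (M.lvl θ = M.lvl θ' → c.bN θ θ' = pureStrat (1 : Fin 2))) ∧
      (∀ ct : ConfigID M, FocalID c ct →
        ∀ ν : DistID T, ν.w.support ⊆ ct.supp →
          ∃ εb : ℝ, εb ∈ Set.Ioo (0:ℝ) 1 ∧ ∀ ε' ∈ Set.Ioo (0:ℝ) εb,
            playTID (typePayID ct) ν.w ((1-ε') • c.dist.w + ε' • ν.w)
              ≤ playTID (typePayID ct) c.dist.w ((1-ε') • c.dist.w + ε' • ν.w)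
            ∧ (l < g → ν.w ≠ c.dist.w →
              playTID (typePayID ct) ν.w ((1-ε') • c.dist.w + ε' • ν.w)
                < playTID (typePayID ct) c.dist.w ((1-ε') • c.dist.w + ε' • ν.w))) := by
  classical
  set Nn : ℕ := (N : ℕ) with hNn
  have hN1n : 1 ≤ Nn := N.one_le
  set K : ℕ → ℝ := fun i => M.k i.succPNat with hK
  have hK0 : K 0 = 0 := by
    show M.k (Nat.succPNat 0) = 0
    have : (Nat.succPNat 0) = 1 := rfl
    rw [this, M.k_one]
  have hKmono : Monotone K := by
    intro i j hij
    apply (M.k_mono.le_iff_le).2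
    rw [← PNat.coe_le_coe, Nat.succPNat_coe, Nat.succPNat_coe]
    omega
  have hNsucc : Nn.succPNat = N + 1 := by
    apply PNat.coe_injective
    rw [Nat.succPNat_coe, PNat.add_coe, PNat.one_coe]
  have hNtop : g + l < K Nn := by
    show g + l < M.k Nn.succPNat
    rw [hNsucc]
    linarith [hN2]
  have hmargK : ∀ i, i < Nn → K (i+1) - K i < g := by
    intro i hi
    have h1 : (i+1).succPNat = i.succPNat + 1 := by
      apply PNat.coe_injective
      rw [Nat.succPNat_coe, PNat.add_coe, Nat.succPNat_coe, PNat.one_coe]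
    show M.k (i+1).succPNat - M.k i.succPNat < g
    rw [h1]
    apply hmarg
    rw [← PNat.coe_le_coe, Nat.succPNat_coe]
    omega
  obtain ⟨x, V, hx0, hxzero, htot, hV0, hIND, hGAP, hcard2⟩ :=
    stmt14_weights g l hg hl0 K Nn hN1n hK0 hKmono hNtop hmargK
  -- the incumbents
  set S0 : Finset ℕ := (Finset.range Nn).filter (fun i => 0 < x i) with hS0
  set θi : ℕ → T := fun i => t i.succPNat with hθi
  have θinj : Function.Injective θi := by
    intro a b h
    have h2 := t_inj hlvl h
    have h3 := congrArg (PNat.val) h2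
    rw [Nat.succPNat_coe, Nat.succPNat_coe] at h3
    omega
  have hS0range : ∀ i ∈ S0, i < Nn := by
    intro i hi
    rw [hS0, Finset.mem_filter, Finset.mem_range] at hi
    exact hi.1
  have hS0pos : ∀ i ∈ S0, 0 < x i := by
    intro i hi
    rw [hS0, Finset.mem_filter] at hi
    exact hi.2
  have hS0sum : ∑ i ∈ S0, x i = 1 := by
    rw [← htot]
    symm
    rw [← Finset.sum_filter_add_sum_filter_not (Finset.range Nn) (fun i => 0 < x i)]
    have : ∑ i ∈ (Finset.range Nn).filter (fun i => ¬ 0 < x i), x i = 0 := by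
      apply Finset.sum_eq_zero
      intro i hi
      rw [Finset.mem_filter] at hi
      exact le_antisymm (not_lt.1 hi.2) (hx0 i)
    rw [this]
    simp [hS0]
  -- generic partial sums
  have hsum_lt : ∀ mi : ℕ, ∑ j ∈ S0.filter (fun j => j < mi), x j
      = ∑ j ∈ Finset.range mi, x j := by
    intro mi
    apply Finset.sum_subset
    · intro j hj
      rw [Finset.mem_filter] at hj
      exact Finset.mem_range.2 hj.2
    · intro j hj hnj
      rcases lt_or_ge j Nn with h | h
      · by_contra hc
        have hmem : j ∈ S0.filter (fun j => j < mi) := by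
          rw [Finset.mem_filter]
          constructor
          · rw [hS0, Finset.mem_filter, Finset.mem_range]
            exact ⟨h, lt_of_le_of_ne (hx0 j) (Ne.symm hc)⟩
          · exact Finset.mem_range.1 hj
        exact hnj hmem
      · exact hxzero j h
  -- the incumbent distribution
  set w : T →₀ ℝ := ∑ i ∈ S0, Finsupp.single (θi i) (x i) with hw
  have hwapp : ∀ i ∈ S0, w (θi i) = x i :=
    fun i hi => finsum_single_apply_mem S0 θi x θinj hi
  have hwout : ∀ τ : T, (∀ i ∈ S0, τ ≠ θi i) → w τ = 0 := by
    intro τ h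
    exact finsum_single_apply_notmem S0 θi x (fun i hi hc => (h i hi) hc.symm)
  have hwsupp : w.support = S0.image θi :=
    finsum_single_support_eq S0 θi x θinj (fun i hi => ne_of_gt (hS0pos i hi))
  have hwnn : ∀ τ, 0 ≤ w τ := by
    intro τ
    rw [hw, Finsupp.finset_sum_apply]
    apply Finset.sum_nonneg
    intro i hi
    rw [Finsupp.single_apply]
    split
    · exact (hS0pos i hi).le
    · exact le_refl 0
  have hwtot : ∑ τ ∈ w.support, w τ = 1 := by
    rw [hwsupp, Finset.sum_image (fun a _ b _ h => θinj h)]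
    rw [Finset.sum_congr rfl (fun i hi => hwapp i hi)]
    exact hS0sum
  have hlvlθ : ∀ i : ℕ, M.lvl (θi i) = i.succPNat := fun i => hlvl _
  have hbN : ∀ a ∈ w.support, ∀ b ∈ w.support,
      M.q (M.lvl a) (M.lvl b) + M.q (M.lvl b) (M.lvl a) < 1 →
      ((pureStrat 1, pureStrat 1) : Mixed (Fin 2) × Mixed (Fin 2)) ∈ NEID M a b := by
    intro a ha b hb hlt
    rw [hwsupp] at ha hb
    obtain ⟨i, hi, rfl⟩ := Finset.mem_image.1 ha
    obtain ⟨j, hj, rfl⟩ := Finset.mem_image.1 hb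
    by_cases hij : i = j
    · subst hij
      exact NEID_self_mem hutil i.succPNat
    · exfalso
      rw [hlvlθ, hlvlθ] at hlt
      rcases lt_or_gt_of_ne (fun hc : i.succPNat = j.succPNat => hij (by
        have := congrArg PNat.val hc
        rw [Nat.succPNat_coe, Nat.succPNat_coe] at this
        omega)) with h | h
      · have := qsum_one hq h
        rw [add_comm] at this
        linarith
      · have := qsum_one hq h
        linarith
  have hbD : ∀ a ∈ w.support, ∀ b ∈ w.support, M.lvl b < M.lvl a →
      (((if M.lvl b < M.lvl a then pureStrat 0 else pureStrat 1 : Mixed (Fin 2)),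
        (if M.lvl a < M.lvl b then pureStrat 0 else pureStrat 1 : Mixed (Fin 2))))
        ∈ DEID M a b := by
    intro a ha b hb hba
    rw [hwsupp] at ha hb
    obtain ⟨i, hi, rfl⟩ := Finset.mem_image.1 ha
    obtain ⟨j, hj, rfl⟩ := Finset.mem_image.1 hb
    rw [if_pos hba, if_neg (not_lt_of_gt hba)]
    rw [hlvlθ, hlvlθ] at hba
    have hne : j.succPNat ≠ i.succPNat := ne_of_lt hba
    exact DEID_theta_mem hutil hlvl hne
  set cfg : ConfigID M :=
    { dist := ⟨w, hwnn, hwtot⟩,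
      bN := fun _ _ => pureStrat 1,
      bD := fun a b => if M.lvl b < M.lvl a then pureStrat 0 else pureStrat 1,
      bN_mem := hbN,
      bD_mem := fun a ha b hb h => hbD a ha b hb h } with hcfg
  have hcsupp : cfg.supp = S0.image θi := by
    show cfg.dist.w.support = S0.image θi
    exact hwsupp
  refine ⟨cfg, ?_, ?_, ?_, ?_⟩
  · -- support characterisation
    intro θ hθ
    rw [hcsupp] at hθ
    obtain ⟨i, hi, rfl⟩ := Finset.mem_image.1 hθ
    refine ⟨i.succPNat, ?_, rfl⟩
    rw [← PNat.coe_le_coe, Nat.succPNat_coe]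
    have := hS0range i hi
    omega
  · -- cardinality
    rw [hcsupp, Finset.card_image_of_injective _ θinj]
    have hcard2' : 2 ≤ S0.card := by
      rw [hS0]
      convert hcard2 using 2
    omega
  · -- behaviour
    intro θ hθ θ' hθ'
    constructor
    · intro hlt
      constructor
      · show (if M.lvl θ' < M.lvl θ then pureStrat 0 else pureStrat 1) = pureStrat 0
        rw [if_pos hlt]
      · show (if M.lvl θ < M.lvl θ' then pureStrat 0 else pureStrat 1) = pureStrat 1
        rw [if_neg (not_lt_of_gt hlt)]
    · intro _
      rfl
  · -- stability
    intro ct hfoc ν hνP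
    set P : Finset T := ct.supp with hP
    have hcdw : cfg.dist.w = w := rfl
    have hμP : w.support ⊆ P := by
      have h := hfoc.1
      rwa [show cfg.supp = w.support from rfl] at h
    have hθP : ∀ i ∈ S0, θi i ∈ P := fun i hi =>
      hμP (by rw [hwsupp]; exact Finset.mem_image_of_mem θi hi)
    have hmemc : ∀ i ∈ S0, θi i ∈ cfg.supp := by
      intro i hi; rw [hcsupp]; exact Finset.mem_image_of_mem _ hi
    set F : T → T → ℝ := typePayID ct with hFdef
    have hFeq : ∀ a b : T, F a b = condFitID ct a b - M.k (M.lvl a) := fun a b => rfl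
    have hsucclt : ∀ a b : ℕ, a < b ↔ a.succPNat < b.succPNat := by
      intro a b
      rw [← PNat.coe_lt_coe, Nat.succPNat_coe, Nat.succPNat_coe]
      omega
    have hKm : ∀ m : ℕ+, K ((m:ℕ) - 1) = M.k m := by
      intro m
      show M.k ((m:ℕ) - 1).succPNat = M.k m
      congr 1
      apply PNat.coe_injective
      rw [Nat.succPNat_coe]
      have h1 : 0 < (m:ℕ) := m.pos
      omega
    -- Step 1 : incumbent entries
    have hENT : ∀ i ∈ S0, ∀ j ∈ S0, F (θi i) (θi j)
        = (if j < i then 1+g else if i < j then 1-l else 1) - K i := by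
      intro i hi j hj
      have hDij := (hfoc.2 _ (hmemc i hi) _ (hmemc j hj)).2
      have hDji := (hfoc.2 _ (hmemc j hj) _ (hmemc i hi)).2
      have hNij := (hfoc.2 _ (hmemc i hi) _ (hmemc j hj)).1
      have hbDc : ∀ a b : T, cfg.bD a b
          = if M.lvl b < M.lvl a then pureStrat 0 else pureStrat 1 := fun a b => rfl
      have hbNc : ∀ a b : T, cfg.bN a b = pureStrat 1 := fun a b => rfl
      rw [hFeq]
      have hki : M.k (M.lvl (θi i)) = K i := by rw [hlvlθ]
      rw [hki]
      rcases lt_trichotomy j i with h | h | h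
      · have hlv : M.lvl (θi j) < M.lvl (θi i) := by
          rw [hlvlθ, hlvlθ]; exact (hsucclt j i).1 h
        rw [condFit_of_lvl_lt hq ct hlv, hDij, hDji, hbDc, hbDc,
          if_pos hlv, if_neg (not_lt_of_gt hlv), hpi, exPay_hd_pp01,
          if_pos h]
      · subst h
        rw [condFit_of_lvl_eq ct rfl, hNij, hbNc, hpi, exPay_hd_pp11,
          if_neg (lt_irrefl _), if_neg (lt_irrefl _)]
      · have hlv : M.lvl (θi i) < M.lvl (θi j) := by
          rw [hlvlθ, hlvlθ]; exact (hsucclt i j).1 h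
        rw [condFit_of_lvl_lt' hq ct hlv, hDij, hDji, hbDc, hbDc,
          if_neg (not_lt_of_gt hlv), if_pos hlv, hpi, exPay_hd_pp10,
          if_neg (by omega : ¬ j < i), if_pos h]
    -- row payoffs
    set row : T → ℝ := fun τ => ∑ j ∈ S0, x j * F τ (θi j) with hrowdef
    set Vv : ℝ := 1 - l + V with hVv
    -- partition helper
    have hpartition : ∀ i ∈ S0,
        ∑ j ∈ S0.filter (fun j => ¬ j < i), x j
          = x i + ∑ j ∈ S0.filter (fun j => i < j), x j := by
      intro i hi
      have hins : S0.filter (fun j => ¬ j < i) = insert i (S0.filter (fun j => i < j)) := by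
        ext a
        simp only [Finset.mem_filter, Finset.mem_insert]
        constructor
        · rintro ⟨ha, hlt⟩
          rcases eq_or_lt_of_le (not_lt.1 hlt) with h | h
          · exact Or.inl h.symm
          · exact Or.inr ⟨ha, h⟩
        · rintro (rfl | ⟨ha, hlt⟩)
          · exact ⟨hi, by omega⟩
          · exact ⟨ha, by omega⟩
      rw [hins, Finset.sum_insert (by simp [Finset.mem_filter])]
    have hgtsum : ∀ i ∈ S0, ∑ j ∈ S0.filter (fun j => i < j), x j
        = 1 - (∑ j ∈ Finset.range i, x j) - x i := by
      intro i hi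
      have h1 := Finset.sum_filter_add_sum_filter_not S0 (fun j => j < i) x
      rw [hsum_lt i, hpartition i hi] at h1
      rw [hS0sum] at h1
      linarith
    -- Step 2 : incumbent rows are Vv
    have hrowI : ∀ i ∈ S0, row (θi i) = Vv := by
      intro i hi
      have hE : ∀ j ∈ S0, x j * F (θi i) (θi j)
          = x j * (if j < i then 1+g else if i < j then 1-l else 1) - x j * K i := by
        intro j hj; rw [hENT i hi j hj]; ring
      show (∑ j ∈ S0, x j * F (θi i) (θi j)) = Vv
      rw [Finset.sum_congr rfl hE, Finset.sum_sub_distrib, ← Finset.sum_mul, hS0sum,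
        one_mul]
      rw [← Finset.sum_filter_add_sum_filter_not S0 (fun j => j < i)]
      have h1 : ∑ j ∈ S0.filter (fun j => j < i),
          x j * (if j < i then 1+g else if i < j then 1-l else 1)
          = (∑ j ∈ Finset.range i, x j) * (1+g) := by
        rw [← hsum_lt i, Finset.sum_mul]
        apply Finset.sum_congr rfl
        intro j hj
        rw [Finset.mem_filter] at hj
        rw [if_pos hj.2]
      have h2 : ∑ j ∈ S0.filter (fun j => ¬ j < i),
          x j * (if j < i then 1+g else if i < j then 1-l else 1)
          = x i + (1 - (∑ j ∈ Finset.range i, x j) - x i) * (1-l) := by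
        have hins : S0.filter (fun j => ¬ j < i) = insert i (S0.filter (fun j => i < j)) := by
          ext a
          simp only [Finset.mem_filter, Finset.mem_insert]
          constructor
          · rintro ⟨ha, hlt⟩
            rcases eq_or_lt_of_le (not_lt.1 hlt) with h | h
            · exact Or.inl h.symm
            · exact Or.inr ⟨ha, h⟩
          · rintro (rfl | ⟨ha, hlt⟩)
            · exact ⟨hi, by omega⟩
            · exact ⟨ha, by omega⟩
        rw [hins, Finset.sum_insert (by simp [Finset.mem_filter])]
        rw [if_neg (lt_irrefl i), if_neg (lt_irrefl i)]
        have h3 : ∑ j ∈ S0.filter (fun j => i < j),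
            x j * (if j < i then 1+g else if i < j then 1-l else 1)
            = (∑ j ∈ S0.filter (fun j => i < j), x j) * (1-l) := by
          rw [Finset.sum_mul]
          apply Finset.sum_congr rfl
          intro j hj
          rw [Finset.mem_filter] at hj
          rw [if_neg (by omega : ¬ j < i), if_pos hj.2]
        rw [h3, hgtsum i hi]
        ring
      rw [h1, h2]
      have hIi := hIND i (hS0pos i hi)
      rw [hVv]
      linarith
    -- Step 3 : mutant rows
    have hcapLT : ∀ τ ∈ P, (∀ i ∈ S0, τ ≠ θi i) → ∀ j ∈ S0,
        F τ (θi j) ≤ (if j < ((M.lvl τ : ℕ) - 1) then 1+g else 1-l) - M.k (M.lvl τ) := by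
      intro τ hτ hτne j hj
      have hτnej : τ ≠ t j.succPNat := hτne j hj
      have hjlt : j < ((M.lvl τ : ℕ) - 1) ↔ (j.succPNat : ℕ+) < M.lvl τ := by
        rw [← PNat.coe_lt_coe, Nat.succPNat_coe]
        have h1 : 0 < ((M.lvl τ):ℕ) := (M.lvl τ).pos
        omega
      rw [hFeq]
      rcases lt_trichotomy (j.succPNat : ℕ+) (M.lvl τ) with h | h | h
      · rw [if_pos (hjlt.2 h)]
        have hlv : M.lvl (θi j) < M.lvl τ := by rw [hlvlθ]; exact h
        rw [condFit_of_lvl_lt hq ct hlv, hpi]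
        have := exPay_hd_le (g := g) (l := l) hg hl0 (ct.bD τ (θi j)) (ct.bD (θi j) τ)
        linarith
      · rw [if_neg (by rw [hjlt, ← h]; exact lt_irrefl _)]
        have hlv : M.lvl τ = M.lvl (θi j) := by rw [hlvlθ]; exact h.symm
        have hqlt : M.q (M.lvl τ) (M.lvl (θi j)) + M.q (M.lvl (θi j)) (M.lvl τ) < 1 := by
          rw [hlv]
          rw [qsum_zero]
          norm_num
        have hne := ct.bN_mem τ hτ (θi j) (hθP j hj) hqlt
        have hpin := NEID_vs_theta_pin hutil j.succPNat hτnej hne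
        rw [condFit_of_lvl_eq ct hlv, hpin, hpi]
        have := exPay_hd_pure0_right_le (g := g) hl1 (ct.bN τ (θi j))
        linarith
      · rw [if_neg (by rw [hjlt]; exact not_lt_of_gt h)]
        have hlv : M.lvl τ < M.lvl (θi j) := by rw [hlvlθ]; exact h
        have hde := ct.bD_mem (θi j) (hθP j hj) τ hτ hlv
        have hpin := DEID_theta_deceiver_pin hutil j.succPNat hτnej hde
        rw [condFit_of_lvl_lt' hq ct hlv, hpin, hpi]
        have := exPay_hd_pure0_right_le (g := g) hl1 (ct.bD τ (θi j))
        linarith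
    have hcapsum : ∀ τ : T, ∑ j ∈ S0,
        x j * ((if j < ((M.lvl τ : ℕ) - 1) then 1+g else 1-l) - M.k (M.lvl τ))
        = 1 - l + ((g+l) * (∑ j ∈ Finset.range ((M.lvl τ : ℕ) - 1), x j)
            - M.k (M.lvl τ)) := by
      intro τ
      set mi : ℕ := (M.lvl τ : ℕ) - 1 with hmi
      have hE : ∀ j ∈ S0, x j * ((if j < mi then 1+g else 1-l) - M.k (M.lvl τ))
          = x j * (if j < mi then 1+g else 1-l) - x j * M.k (M.lvl τ) := by
        intro j hj; ring
      rw [Finset.sum_congr rfl hE, Finset.sum_sub_distrib, ← Finset.sum_mul, hS0sum,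
        one_mul]
      rw [← Finset.sum_filter_add_sum_filter_not S0 (fun j => j < mi)]
      have h1 : ∑ j ∈ S0.filter (fun j => j < mi), x j * (if j < mi then 1+g else 1-l)
          = (∑ j ∈ Finset.range mi, x j) * (1+g) := by
        rw [← hsum_lt mi, Finset.sum_mul]
        apply Finset.sum_congr rfl
        intro j hj
        rw [Finset.mem_filter] at hj
        rw [if_pos hj.2]
      have h2 : ∑ j ∈ S0.filter (fun j => ¬ j < mi), x j * (if j < mi then 1+g else 1-l)
          = (1 - ∑ j ∈ Finset.range mi, x j) * (1-l) := by
        have h3 := Finset.sum_filter_add_sum_filter_not S0 (fun j => j < mi) x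
        rw [hsum_lt mi, hS0sum] at h3
        have h4 : ∑ j ∈ S0.filter (fun j => ¬ j < mi), x j * (if j < mi then 1+g else 1-l)
            = ∑ j ∈ S0.filter (fun j => ¬ j < mi), x j * (1-l) := by
          apply Finset.sum_congr rfl
          intro j hj
          rw [Finset.mem_filter] at hj
          rw [if_neg hj.2]
        rw [h4, ← Finset.sum_mul]
        rw [show (∑ j ∈ S0.filter (fun j => ¬ j < mi), x j)
          = 1 - ∑ j ∈ Finset.range mi, x j by linarith]
      rw [h1, h2]
      ring
    have hgapτ : ∀ τ : T, (g+l) * (∑ j ∈ Finset.range ((M.lvl τ : ℕ) - 1), x j)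
        - M.k (M.lvl τ) ≤ V := by
      intro τ
      have := hGAP ((M.lvl τ : ℕ) - 1)
      rwa [hKm (M.lvl τ)] at this
    have hrowcap : ∀ τ ∈ P, (∀ i ∈ S0, τ ≠ θi i) →
        row τ ≤ 1 - l + ((g+l) * (∑ j ∈ Finset.range ((M.lvl τ : ℕ) - 1), x j)
          - M.k (M.lvl τ)) := by
      intro τ hτ hτne
      show (∑ j ∈ S0, x j * F τ (θi j)) ≤ _
      calc (∑ j ∈ S0, x j * F τ (θi j))
          ≤ ∑ j ∈ S0, x j * ((if j < ((M.lvl τ : ℕ) - 1) then 1+g else 1-l)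
              - M.k (M.lvl τ)) := by
            apply Finset.sum_le_sum
            intro j hj
            exact mul_le_mul_of_nonneg_left (hcapLT τ hτ hτne j hj) (hx0 j)
      _ = 1 - l + ((g+l) * (∑ j ∈ Finset.range ((M.lvl τ : ℕ) - 1), x j)
            - M.k (M.lvl τ)) := hcapsum τ
    have hrowMle : ∀ τ ∈ P, (∀ i ∈ S0, τ ≠ θi i) → row τ ≤ Vv :=
      fun τ hτ hτne => le_trans (hrowcap τ hτ hτne)
        (by rw [hVv]; linarith [hgapτ τ])
    -- Step 3b : pinning of ties
    have hpinsum : ∀ τ ∈ P, (∀ i ∈ S0, τ ≠ θi i) → row τ = Vv → ∀ j ∈ S0,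
        condFitID ct τ (θi j) + condFitID ct (θi j) τ = 2 + g - l := by
      intro τ hτ hτne hrowτ
      have hjm : ∀ j : ℕ, j < ((M.lvl τ : ℕ) - 1) ↔ (j.succPNat : ℕ+) < M.lvl τ := by
        intro j
        rw [← PNat.coe_lt_coe, Nat.succPNat_coe]
        have h1 : 0 < ((M.lvl τ):ℕ) := (M.lvl τ).pos
        omega
      have hmiS : ((M.lvl τ : ℕ) - 1) ∉ S0 := by
        intro hmi
        have hIi := hIND _ (hS0pos _ hmi)
        rw [hKm (M.lvl τ)] at hIi
        have hlt : row τ < Vv := by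
          have h1 := hrowcap τ hτ hτne
          have h2 := hS0pos _ hmi
          rw [hVv]
          nlinarith
        rw [hrowτ] at hlt
        exact absurd hlt (lt_irrefl _)
      have hsumeq : (∑ j ∈ S0, x j * F τ (θi j))
          = ∑ j ∈ S0, x j * ((if j < ((M.lvl τ : ℕ) - 1) then 1+g else 1-l)
              - M.k (M.lvl τ)) := by
        have hle1 : (∑ j ∈ S0, x j * F τ (θi j))
            ≤ ∑ j ∈ S0, x j * ((if j < ((M.lvl τ : ℕ) - 1) then 1+g else 1-l)
                - M.k (M.lvl τ)) := by
          apply Finset.sum_le_sum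
          intro j hj
          exact mul_le_mul_of_nonneg_left (hcapLT τ hτ hτne j hj) (hx0 j)
        have hge1 : (∑ j ∈ S0, x j * ((if j < ((M.lvl τ : ℕ) - 1) then 1+g else 1-l)
            - M.k (M.lvl τ))) ≤ ∑ j ∈ S0, x j * F τ (θi j) := by
          have h1 := hcapsum τ
          have h2 := hgapτ τ
          have h3 : (∑ j ∈ S0, x j * F τ (θi j)) = Vv := hrowτ
          rw [h1, h3, hVv]
          linarith
        linarith
      have heach : ∀ j ∈ S0, F τ (θi j)
          = (if j < ((M.lvl τ : ℕ) - 1) then 1+g else 1-l) - M.k (M.lvl τ) := by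
        intro j hj
        have h1 := (Finset.sum_eq_sum_iff_of_le (fun j hj =>
          mul_le_mul_of_nonneg_left (hcapLT τ hτ hτne j hj) (hx0 j))).1 hsumeq j hj
        exact mul_left_cancel₀ (ne_of_gt (hS0pos j hj)) h1
      intro j hj
      have hτnej : τ ≠ t j.succPNat := hτne j hj
      have hjne : j ≠ (M.lvl τ : ℕ) - 1 := fun hc => hmiS (hc ▸ hj)
      rcases lt_or_gt_of_ne hjne with h | h
      · -- incumbent below the tied mutant
        have hlv : M.lvl (θi j) < M.lvl τ := by rw [hlvlθ]; exact (hjm j).1 h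
        have hcf : condFitID ct τ (θi j) = 1 + g := by
          have h1 := heach j hj
          rw [if_pos h, hFeq] at h1
          linarith
        rw [condFit_of_lvl_lt hq ct hlv, hpi] at hcf
        obtain ⟨hp1, hp2⟩ := exPay_hd_max_pin hg hl0 _ _ hcf
        rw [condFit_of_lvl_lt hq ct hlv, condFit_of_lvl_lt' hq ct hlv, hpi,
          hp1, hp2, exPay_hd_pp01, exPay_hd_pp10]
        ring
      · -- incumbent above the tied mutant
        have hlv : M.lvl τ < M.lvl (θi j) := by
          rw [hlvlθ]
          rcases lt_trichotomy (M.lvl τ) (j.succPNat : ℕ+) with h' | h' | h'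
          · exact h'
          · exfalso
            have hc := congrArg (PNat.val) h'
            rw [Nat.succPNat_coe] at hc
            omega
          · exfalso; exact absurd ((hjm j).2 h') (by omega)
        have hdec := DEID_theta_deceiver_pin hutil j.succPNat hτnej
          (ct.bD_mem (θi j) (hθP j hj) τ hτ hlv)
        have hcf : condFitID ct τ (θi j) = 1 - l := by
          have h1 := heach j hj
          rw [if_neg (by omega : ¬ j < (M.lvl τ : ℕ) - 1), hFeq] at h1
          linarith
        rw [condFit_of_lvl_lt' hq ct hlv, hpi, hdec] at hcf
        have hp2 := exPay_hd_pure0_pin hl1 _ hcf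
        rw [condFit_of_lvl_lt' hq ct hlv, condFit_of_lvl_lt hq ct hlv, hpi,
          hdec, hp2, exPay_hd_pp01, exPay_hd_pp10]
        ring
    -- Step 4 : assembly
    have hcolred : ∀ φ : T → ℝ, ∑ τ ∈ P, w τ * φ τ = ∑ j ∈ S0, x j * φ (θi j) := by
      intro φ
      rw [← Finset.sum_subset hμP (fun τ _ hτ => by
        rw [Finsupp.notMem_support_iff.1 hτ]; ring)]
      rw [hwsupp, Finset.sum_image (fun a _ b _ h => θinj h)]
      exact Finset.sum_congr rfl (fun j hj => by rw [hwapp j hj])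
    have hνsum : ∑ τ ∈ P, ν.w τ = 1 := distid_sum_over ν P hνP
    have hwsum1 : ∑ τ ∈ P, w τ = 1 := distid_sum_over cfg.dist P hμP
    have hrowP : ∀ τ ∈ P, ∑ τ' ∈ P, w τ' * F τ τ' = row τ := by
      intro τ _
      exact hcolred (fun τ' => F τ τ')
    have hrowle : ∀ τ ∈ P, row τ ≤ Vv := by
      intro τ hτ
      by_cases hinc : ∃ i ∈ S0, τ = θi i
      · obtain ⟨i, hi, rfl⟩ := hinc
        exact le_of_eq (hrowI i hi)
      · push_neg at hinc
        exact hrowMle τ hτ hinc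
    set colν : T → ℝ := fun τ => ∑ τ' ∈ P, ν.w τ' * F τ τ' with hcolν
    set A : ℝ := ∑ τ ∈ P, ν.w τ * row τ with hA
    set B1 : ℝ := ∑ τ ∈ P, ν.w τ * colν τ with hB1
    set D : ℝ := ∑ τ ∈ P, w τ * colν τ with hD
    have hC : ∑ τ ∈ P, w τ * row τ = Vv := by
      have h1 : ∑ τ ∈ P, w τ * row τ = ∑ i ∈ S0, x i * row (θi i) := hcolred row
      have h2 : ∑ i ∈ S0, x i * row (θi i) = ∑ i ∈ S0, x i * Vv :=
        Finset.sum_congr rfl (fun i hi => by rw [hrowI i hi])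
      rw [h1, h2, ← Finset.sum_mul, hS0sum, one_mul]
    have hpay : ∀ (aw : T →₀ ℝ), aw.support ⊆ P → ∀ ε' : ℝ,
        playTID F aw ((1-ε') • w + ε' • ν.w)
          = (1-ε') * (∑ τ ∈ P, aw τ * row τ) + ε' * (∑ τ ∈ P, aw τ * colν τ) := by
      intro aw haw ε'
      have hmixsupp : ((1-ε') • w + ε' • ν.w).support ⊆ P :=
        subset_trans (mix_support_subset _ _ _ _) (Finset.union_subset hμP hνP)
      rw [playTID_eq_sum F aw _ P P haw hmixsupp]
      have hterm : ∀ τ ∈ P, ∑ τ' ∈ P, aw τ * ((1-ε') • w + ε' • ν.w) τ' * F τ τ'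
          = (1-ε') * (aw τ * row τ) + ε' * (aw τ * colν τ) := by
        intro τ hτ
        rw [← hrowP τ hτ, hcolν]
        simp only
        rw [Finset.mul_sum, Finset.mul_sum, Finset.mul_sum, Finset.mul_sum,
          ← Finset.sum_add_distrib]
        apply Finset.sum_congr rfl
        intro τ' _
        rw [mix_apply]
        ring
      rw [Finset.sum_congr rfl hterm, Finset.sum_add_distrib, ← Finset.mul_sum,
        ← Finset.mul_sum]
    have hdiff : ∀ ε' : ℝ,
        playTID F cfg.dist.w ((1-ε') • cfg.dist.w + ε' • ν.w)
          - playTID F ν.w ((1-ε') • cfg.dist.w + ε' • ν.w)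
        = (1-ε') * (Vv - A) + ε' * (D - B1) := by
      intro ε'
      rw [hcdw, hpay w hμP ε', hpay ν.w hνP ε', hC]
      rw [hA, hB1, hD]
      ring
    have hAle : A ≤ Vv := by
      rw [hA]
      calc ∑ τ ∈ P, ν.w τ * row τ ≤ ∑ τ ∈ P, ν.w τ * Vv :=
        Finset.sum_le_sum (fun τ hτ => mul_le_mul_of_nonneg_left (hrowle τ hτ) (ν.nonneg τ))
      _ = Vv := by rw [← Finset.sum_mul, hνsum, one_mul]
    rcases lt_or_eq_of_le hAle with hAlt | hAeq
    · -- first-order strict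
      refine ⟨(Vv - A) / ((Vv - A) + |D - B1| + 1), ⟨?_, ?_⟩, ?_⟩
      · apply div_pos (by linarith)
        have := abs_nonneg (D - B1)
        linarith
      · rw [div_lt_one (by have := abs_nonneg (D - B1); linarith)]
        have := abs_nonneg (D - B1)
        linarith
      · intro ε' hε'
        have hden : (0:ℝ) < (Vv - A) + |D - B1| + 1 := by
          have := abs_nonneg (D - B1)
          linarith
        have h1 : ε' * ((Vv - A) + |D - B1| + 1) < Vv - A := by
          have := hε'.2
          rwa [lt_div_iff₀ hden] at this
        have h2 : 0 < ε' := hε'.1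
        have habs : -|D - B1| ≤ D - B1 := neg_abs_le _
        have hdpos : 0 < (1-ε') * (Vv - A) + ε' * (D - B1) := by
          nlinarith [mul_le_mul_of_nonneg_left habs h2.le]
        constructor
        · have := hdiff ε'; linarith
        · intro _ _; have := hdiff ε'; linarith
    · -- ties : second-order argument
      set z : T → ℝ := fun τ => ν.w τ - w τ with hzdef
      have hzsum : ∑ τ ∈ P, z τ = 0 := by
        rw [hzdef]
        rw [Finset.sum_sub_distrib, hνsum, hwsum1]
        ring
      have hties : ∀ τ ∈ P, ν.w τ ≠ 0 → row τ = Vv := by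
        intro τ hτ hν0
        have hsum0 : ∑ τ' ∈ P, ν.w τ' * (Vv - row τ') = 0 := by
          have h1 : ∑ τ' ∈ P, ν.w τ' * (Vv - row τ')
              = (∑ τ' ∈ P, ν.w τ' * Vv) - A := by
            rw [hA, ← Finset.sum_sub_distrib]
            apply Finset.sum_congr rfl
            intro τ' _
            ring
          rw [h1, ← Finset.sum_mul, hνsum, one_mul, ← hAeq]
          ring
        have h2 := (Finset.sum_eq_zero_iff_of_nonneg (fun τ' hτ' =>
          mul_nonneg (ν.nonneg τ') (by linarith [hrowle τ' hτ']))).1 hsum0 τ hτ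
        rcases mul_eq_zero.1 h2 with h | h
        · exact absurd h hν0
        · linarith
      have hzrow : ∀ τ ∈ P, z τ ≠ 0 → row τ = Vv := by
        intro τ hτ hz0
        by_cases hinc : ∃ i ∈ S0, τ = θi i
        · obtain ⟨i, hi, rfl⟩ := hinc
          exact hrowI i hi
        · push_neg at hinc
          have hw0 : w τ = 0 := hwout τ (fun i hi => hinc i hi)
          apply hties τ hτ
          intro hν0
          apply hz0
          rw [hzdef]
          simp only
          rw [hν0, hw0]
          ring
      set G : T → T → ℝ := fun a b => condFitID ct a b - 1 with hGdef
      have hFG : ∀ a b : T, F a b = G a b + (1 - M.k (M.lvl a)) := by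
        intro a b
        rw [hFeq, hGdef]
        ring
      have hGd : ∀ τ : T, G τ τ ≤ (g - l)/4 := by
        intro τ
        have := condFit_diag_le hpi hgl ct τ
        rw [hGdef]
        simp only
        linarith
      have hGpairLe : ∀ a b : T, G a b + G b a ≤ g - l := by
        intro a b
        have := condFit_pair_le hpi hgl hq ct a b
        rw [hGdef]
        simp only
        linarith
      have hGpairEq : ∀ i ∈ S0, ∀ τ' ∈ P, z τ' ≠ 0 → θi i ≠ τ' →
          G (θi i) τ' + G τ' (θi i) = g - l := by
        intro i hi τ' hτ' hz0 hne
        by_cases hinc : ∃ j ∈ S0, τ' = θi j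
        · obtain ⟨j, hj, rfl⟩ := hinc
          have hij : i ≠ j := fun hc => hne (by rw [hc])
          have e1 := hENT i hi j hj
          have e2 := hENT j hj i hi
          rw [hFeq] at e1 e2
          rw [hlvlθ] at e1 e2
          rw [hGdef]
          simp only
          rcases lt_or_gt_of_ne hij with h | h
          · rw [if_neg (by omega : ¬ j < i), if_pos h] at e1
            rw [if_pos h] at e2
            have hki : M.k i.succPNat = K i := rfl
            have hkj : M.k j.succPNat = K j := rfl
            linarith
          · rw [if_pos h] at e1
            rw [if_neg (by omega : ¬ i < j), if_pos h] at e2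
            have hki : M.k i.succPNat = K i := rfl
            have hkj : M.k j.succPNat = K j := rfl
            linarith
        · push_neg at hinc
          have hw0 : w τ' = 0 := hwout τ' (fun j hj => hinc j hj)
          have hν0 : ν.w τ' ≠ 0 := by
            intro hc
            apply hz0
            rw [hzdef]
            simp only
            rw [hc, hw0]
            ring
          have hrowτ' := hties τ' hτ' hν0
          have := hpinsum τ' hτ' (fun j hj => hinc j hj) hrowτ' i hi
          rw [hGdef]
          simp only
          linarith
      have key : ∀ τ ∈ P, ∀ τ' ∈ P, z τ * z τ' * (G τ τ' + G τ' τ)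
          ≤ z τ * z τ' * (g - l) - (if τ = τ' then (g-l)/2 * (z τ * z τ) else 0) := by
        intro τ hτ τ' hτ'
        by_cases heqt : τ = τ'
        · subst heqt
          rw [if_pos rfl]
          have h1 := hGd τ
          nlinarith [mul_self_nonneg (z τ)]
        · rw [if_neg heqt, sub_zero]
          by_cases hz1 : z τ = 0
          · rw [hz1]; ring_nf; exact le_refl _
          by_cases hz2 : z τ' = 0
          · rw [hz2]; ring_nf; exact le_refl _
          by_cases hinc1 : ∃ i ∈ S0, τ = θi i
          · obtain ⟨i, hi, rfl⟩ := hinc1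
            rw [hGpairEq i hi τ' hτ' hz2 heqt]
          by_cases hinc2 : ∃ i ∈ S0, τ' = θi i
          · obtain ⟨i, hi, rfl⟩ := hinc2
            have := hGpairEq i hi τ hτ hz1 (fun hc => heqt hc.symm)
            rw [show G τ (θi i) + G (θi i) τ = G (θi i) τ + G τ (θi i) by ring, this]
          · push_neg at hinc1
            push_neg at hinc2
            have hw1 : w τ = 0 := hwout τ (fun i hi => hinc1 i hi)
            have hw2 : w τ' = 0 := hwout τ' (fun i hi => hinc2 i hi)
            have hzn1 : 0 ≤ z τ := by
              rw [hzdef]; simp only; rw [hw1]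
              have := ν.nonneg τ; linarith
            have hzn2 : 0 ≤ z τ' := by
              rw [hzdef]; simp only; rw [hw2]
              have := ν.nonneg τ'; linarith
            exact mul_le_mul_of_nonneg_left (hGpairLe τ τ') (mul_nonneg hzn1 hzn2)
      set SQ : ℝ := ∑ τ ∈ P, z τ * z τ with hSQ
      have hSQnn : 0 ≤ SQ := Finset.sum_nonneg (fun τ _ => mul_self_nonneg (z τ))
      have hQkey : (∑ τ ∈ P, ∑ τ' ∈ P, z τ * z τ' * (G τ τ' + G τ' τ))
          ≤ - ((g-l)/2) * SQ := by
        calc (∑ τ ∈ P, ∑ τ' ∈ P, z τ * z τ' * (G τ τ' + G τ' τ))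
            ≤ ∑ τ ∈ P, ∑ τ' ∈ P, (z τ * z τ' * (g-l)
                - (if τ = τ' then (g-l)/2 * (z τ * z τ) else 0)) :=
              Finset.sum_le_sum (fun τ hτ => Finset.sum_le_sum (fun τ' hτ' => key τ hτ τ' hτ'))
        _ = (∑ τ ∈ P, ∑ τ' ∈ P, z τ * z τ' * (g-l))
            - ∑ τ ∈ P, ∑ τ' ∈ P, (if τ = τ' then (g-l)/2 * (z τ * z τ) else 0) := by
              rw [← Finset.sum_sub_distrib]
              apply Finset.sum_congr rfl
              intro τ _
              rw [← Finset.sum_sub_distrib]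
        _ = - ((g-l)/2) * SQ := by
              have e1 : (∑ τ ∈ P, ∑ τ' ∈ P, z τ * z τ' * (g-l))
                  = (∑ τ ∈ P, z τ) * (∑ τ' ∈ P, z τ') * (g-l) := by
                rw [Finset.sum_mul_sum, Finset.sum_mul]
                apply Finset.sum_congr rfl
                intro τ _
                rw [Finset.sum_mul]
              have e2 : (∑ τ ∈ P, ∑ τ' ∈ P, (if τ = τ' then (g-l)/2 * (z τ * z τ) else 0))
                  = ((g-l)/2) * SQ := by
                have e3 : ∀ τ ∈ P, (∑ τ' ∈ P, (if τ = τ' then (g-l)/2 * (z τ * z τ) else 0))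
                    = (g-l)/2 * (z τ * z τ) := by
                  intro τ hτ
                  rw [Finset.sum_ite_eq P τ (fun _ => (g-l)/2 * (z τ * z τ)), if_pos hτ]
                rw [Finset.sum_congr rfl e3, hSQ, Finset.mul_sum]
              rw [e1, e2, hzsum]
              ring
      have hsym : (∑ τ ∈ P, ∑ τ' ∈ P, z τ * z τ' * G τ τ')
          = ∑ τ ∈ P, ∑ τ' ∈ P, z τ * z τ' * G τ' τ := by
        rw [Finset.sum_comm]
        exact Finset.sum_congr rfl (fun τ _ => Finset.sum_congr rfl (fun τ' _ => by ring))
      have hQG : (∑ τ ∈ P, ∑ τ' ∈ P, z τ * z τ' * G τ τ') ≤ - ((g-l)/4) * SQ := by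
        have h2 : (∑ τ ∈ P, ∑ τ' ∈ P, z τ * z τ' * G τ τ')
            + (∑ τ ∈ P, ∑ τ' ∈ P, z τ * z τ' * G τ τ')
            = ∑ τ ∈ P, ∑ τ' ∈ P, z τ * z τ' * (G τ τ' + G τ' τ) := by
          nth_rewrite 2 [hsym]
          rw [← Finset.sum_add_distrib]
          apply Finset.sum_congr rfl
          intro τ _
          rw [← Finset.sum_add_distrib]
          apply Finset.sum_congr rfl
          intro τ' _
          ring
        have h3 := hQkey
        rw [← h2] at h3
        linarith
      have hQF : (∑ τ ∈ P, ∑ τ' ∈ P, z τ * z τ' * F τ τ')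
          = ∑ τ ∈ P, ∑ τ' ∈ P, z τ * z τ' * G τ τ' := by
        have h1 : ∀ τ ∈ P, (∑ τ' ∈ P, z τ * z τ' * F τ τ')
            = (∑ τ' ∈ P, z τ * z τ' * G τ τ')
              + z τ * (1 - M.k (M.lvl τ)) * (∑ τ' ∈ P, z τ') := by
          intro τ _
          rw [Finset.mul_sum, ← Finset.sum_add_distrib]
          apply Finset.sum_congr rfl
          intro τ' _
          rw [hFG]
          ring
        rw [Finset.sum_congr rfl h1, Finset.sum_add_distrib]
        have h2 : (∑ τ ∈ P, z τ * (1 - M.k (M.lvl τ)) * (∑ τ' ∈ P, z τ')) = 0 := by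
          rw [hzsum]
          simp
        rw [h2, add_zero]
      have hcol2 : ∀ τ ∈ P, colν τ = (∑ τ' ∈ P, z τ' * F τ τ') + row τ := by
        intro τ hτ
        rw [hcolν, ← hrowP τ hτ, ← Finset.sum_add_distrib]
        apply Finset.sum_congr rfl
        intro τ' _
        rw [hzdef]
        simp only
        ring
      have hzrowsum : ∑ τ ∈ P, z τ * row τ = 0 := by
        have h1 : ∀ τ ∈ P, z τ * row τ = z τ * Vv := by
          intro τ hτ
          by_cases hz0 : z τ = 0
          · rw [hz0]; ring
          · rw [hzrow τ hτ hz0]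
        rw [Finset.sum_congr rfl h1, ← Finset.sum_mul, hzsum]
        ring
      have hDB : D - B1 = - ∑ τ ∈ P, ∑ τ' ∈ P, z τ * z τ' * F τ τ' := by
        have h1 : D - B1 = - ∑ τ ∈ P, z τ * colν τ := by
          rw [hD, hB1, ← Finset.sum_sub_distrib, ← Finset.sum_neg_distrib]
          apply Finset.sum_congr rfl
          intro τ _
          rw [hzdef]
          simp only
          ring
        rw [h1]
        congr 1
        have h2 : ∀ τ ∈ P, z τ * colν τ
            = (∑ τ' ∈ P, z τ * z τ' * F τ τ') + z τ * row τ := by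
          intro τ hτ
          rw [hcol2 τ hτ, mul_add, Finset.mul_sum]
          congr 1
          apply Finset.sum_congr rfl
          intro τ' _
          ring
        rw [Finset.sum_congr rfl h2, Finset.sum_add_distrib, hzrowsum, add_zero]
      have hDBnn : 0 ≤ D - B1 := by
        rw [hDB, hQF]
        have := hQG
        nlinarith
      refine ⟨1/2, ⟨by norm_num, by norm_num⟩, ?_⟩
      intro ε' hε'
      constructor
      · have := hdiff ε'
        have h2 : (1-ε') * (Vv - A) = 0 := by rw [← hAeq]; ring
        nlinarith [hε'.1.le]
      · intro hlg hne
        rw [hcdw] at hne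
        have hzex : ∃ τ0 ∈ P, z τ0 ≠ 0 := by
          by_contra hc
          push_neg at hc
          apply hne
          apply Finsupp.ext
          intro τ
          by_cases hτ : τ ∈ P
          · have := hc τ hτ
            rw [hzdef] at this
            simp only at this
            linarith [this]
          · rw [Finsupp.notMem_support_iff.1 (fun hmem => hτ (hνP hmem)),
              Finsupp.notMem_support_iff.1 (fun hmem => hτ (hμP hmem))]
        obtain ⟨τ0, hτ0, hz0⟩ := hzex
        have hSQpos : 0 < SQ := by
          rw [hSQ]
          have h1 : 0 < z τ0 * z τ0 := mul_self_pos.2 hz0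
          have h2 : z τ0 * z τ0 ≤ SQ := Finset.single_le_sum
            (fun τ _ => mul_self_nonneg (z τ)) hτ0
          linarith
        have hDBpos : 0 < D - B1 := by
          rw [hDB, hQF]
          have := hQG
          nlinarith
        have := hdiff ε'
        have h2 : (1-ε') * (Vv - A) = 0 := by rw [← hAeq]; ring
        nlinarith [hε'.1]

end Stmt14MainCons

section Stmt14Viol

variable {T : Type}

lemma playTID_mix_right (F : T → T → ℝ) (P : Finset T) (a b c : T →₀ ℝ)
    (ha : a.support ⊆ P) (hb : b.support ⊆ P) (hc : c.support ⊆ P) (s e : ℝ) :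
    playTID F a (s • b + e • c)
      = s * (∑ τ ∈ P, a τ * (∑ τ' ∈ P, b τ' * F τ τ'))
        + e * (∑ τ ∈ P, a τ * (∑ τ' ∈ P, c τ' * F τ τ')) := by
  have hmix : (s • b + e • c).support ⊆ P :=
    subset_trans (mix_support_subset _ _ _ _) (Finset.union_subset hb hc)
  rw [playTID_eq_sum F a _ P P ha hmix]
  have hterm : ∀ τ ∈ P, ∑ τ' ∈ P, a τ * (s • b + e • c) τ' * F τ τ'
      = s * (a τ * (∑ τ' ∈ P, b τ' * F τ τ'))
        + e * (a τ * (∑ τ' ∈ P, c τ' * F τ τ')) := by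
    intro τ _
    rw [Finset.mul_sum, Finset.mul_sum, Finset.mul_sum, Finset.mul_sum,
      ← Finset.sum_add_distrib]
    apply Finset.sum_congr rfl
    intro τ' _
    rw [mix_apply]
    ring
  rw [Finset.sum_congr rfl hterm, Finset.sum_add_distrib, ← Finset.mul_sum,
    ← Finset.mul_sum]

/-- First/second-order violation implies failure of neutral stability. -/
lemma nss_violation (F : T → T → ℝ) (P : Finset T) (μw νw : T →₀ ℝ)
    (hμ : μw.support ⊆ P) (hν : νw.support ⊆ P)
    (hs : 0 ≤ ∑ τ ∈ P, (νw τ - μw τ) * (∑ τ' ∈ P, μw τ' * F τ τ'))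
    (hsq : (0 < ∑ τ ∈ P, (νw τ - μw τ) * (∑ τ' ∈ P, μw τ' * F τ τ'))
        ∨ 0 < ∑ τ ∈ P, (νw τ - μw τ) * (∑ τ' ∈ P, (νw τ' - μw τ') * F τ τ'))
    (εb : ℝ) (hεb : εb ∈ Set.Ioo (0:ℝ) 1) :
    ¬ ∀ ε' ∈ Set.Ioo (0:ℝ) εb,
      playTID F νw ((1-ε') • μw + ε' • νw) ≤ playTID F μw ((1-ε') • μw + ε' • νw) := by
  classical
  set s : ℝ := ∑ τ ∈ P, (νw τ - μw τ) * (∑ τ' ∈ P, μw τ' * F τ τ') with hsdef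
  set q2 : ℝ := ∑ τ ∈ P, (νw τ - μw τ) * (∑ τ' ∈ P, (νw τ' - μw τ') * F τ τ') with hq2def
  set rμ : T → ℝ := fun τ => ∑ τ' ∈ P, μw τ' * F τ τ' with hrμ
  set rν : T → ℝ := fun τ => ∑ τ' ∈ P, νw τ' * F τ τ' with hrν
  have hseq : s = (∑ τ ∈ P, νw τ * rμ τ) - ∑ τ ∈ P, μw τ * rμ τ := by
    rw [hsdef, ← Finset.sum_sub_distrib]
    apply Finset.sum_congr rfl
    intro τ _
    ring
  have hq2eq : q2 = ((∑ τ ∈ P, νw τ * rν τ) + ∑ τ ∈ P, μw τ * rμ τ)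
      - ((∑ τ ∈ P, νw τ * rμ τ) + ∑ τ ∈ P, μw τ * rν τ) := by
    rw [hq2def]
    have hterm : ∀ τ ∈ P, (νw τ - μw τ) * (∑ τ' ∈ P, (νw τ' - μw τ') * F τ τ')
        = (νw τ * rν τ + μw τ * rμ τ) - (νw τ * rμ τ + μw τ * rν τ) := by
      intro τ _
      have hin : (∑ τ' ∈ P, (νw τ' - μw τ') * F τ τ') = rν τ - rμ τ := by
        rw [hrν, hrμ]
        simp only
        rw [← Finset.sum_sub_distrib]
        apply Finset.sum_congr rfl
        intro τ' _
        ring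
      rw [hin]
      ring
    rw [Finset.sum_congr rfl hterm, Finset.sum_sub_distrib, Finset.sum_add_distrib,
      Finset.sum_add_distrib]
  have hdiff : ∀ ε' : ℝ, playTID F μw ((1-ε') • μw + ε' • νw)
      - playTID F νw ((1-ε') • μw + ε' • νw) = - s - ε' * q2 := by
    intro ε'
    rw [playTID_mix_right F P μw μw νw hμ hμ hν (1-ε') ε',
      playTID_mix_right F P νw μw νw hν hμ hν (1-ε') ε']
    have e1 : (∑ τ ∈ P, μw τ * (∑ τ' ∈ P, μw τ' * F τ τ')) = ∑ τ ∈ P, μw τ * rμ τ := rfl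
    have e2 : (∑ τ ∈ P, μw τ * (∑ τ' ∈ P, νw τ' * F τ τ')) = ∑ τ ∈ P, μw τ * rν τ := rfl
    have e3 : (∑ τ ∈ P, νw τ * (∑ τ' ∈ P, μw τ' * F τ τ')) = ∑ τ ∈ P, νw τ * rμ τ := rfl
    have e4 : (∑ τ ∈ P, νw τ * (∑ τ' ∈ P, νw τ' * F τ τ')) = ∑ τ ∈ P, νw τ * rν τ := rfl
    rw [e1, e2, e3, e4]
    have h1 := hseq
    have h2 := hq2eq
    linear_combination h1 + ε' * h2
  intro hall
  rcases hsq with hpos | hpos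
  · set ε0 : ℝ := min (εb/2) (s/(2*(|q2|+1))) with hε0
    have habs : 0 ≤ |q2| := abs_nonneg q2
    have hε0pos : 0 < ε0 := by
      apply lt_min
      · linarith [hεb.1]
      · apply div_pos hpos
        linarith
    have hε0lt : ε0 < εb := lt_of_le_of_lt (min_le_left _ _) (by linarith [hεb.1])
    have h1 := hall ε0 ⟨hε0pos, hε0lt⟩
    have h2 := hdiff ε0
    have h3 : ε0 ≤ s/(2*(|q2|+1)) := min_le_right _ _
    have h4 : ε0 * |q2| ≤ s/2 := by
      calc ε0 * |q2| ≤ (s/(2*(|q2|+1))) * |q2| := by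
            apply mul_le_mul_of_nonneg_right (min_le_right _ _) habs
      _ ≤ s/2 := by
            rw [div_mul_eq_mul_div, div_le_div_iff₀ (by linarith) (by norm_num : (0:ℝ) < 2)]
            nlinarith [hpos.le, habs]
    have h5 : - (ε0 * q2) ≤ ε0 * |q2| := by
      have := neg_abs_le q2
      nlinarith [hε0pos.le]
    linarith
  · have h1 := hall (εb/2) ⟨by linarith [hεb.1], by linarith [hεb.1]⟩
    have h2 := hdiff (εb/2)
    nlinarith [hεb.1]

/-- Build a `DistID` from support data. -/
lemma distid_total_of (wv : T →₀ ℝ) (P : Finset T) (hsub : wv.support ⊆ P)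
    (htot : ∑ τ ∈ P, wv τ = 1) : ∑ τ ∈ wv.support, wv τ = 1 := by
  rw [Finset.sum_subset hsub (fun τ _ hτ => Finsupp.notMem_support_iff.1 hτ)]
  exact htot

lemma single_one_nonneg (a : T) : ∀ τ, 0 ≤ (Finsupp.single a (1:ℝ)) τ := by
  intro τ
  rw [Finsupp.single_apply]
  split <;> norm_num

lemma single_one_total (a : T) : ∑ τ ∈ (Finsupp.single a (1:ℝ)).support,
    (Finsupp.single a (1:ℝ)) τ = 1 := by
  rw [Finsupp.support_single_ne_zero a (by norm_num : (1:ℝ) ≠ 0)]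
  simp

lemma sum_single_mul (P : Finset T) (a : T) (ha : a ∈ P) (δ : ℝ) (f : T → ℝ) :
    ∑ τ ∈ P, (Finsupp.single a δ) τ * f τ = δ * f a := by
  rw [Finset.sum_eq_single_of_mem a ha]
  · rw [Finsupp.single_apply, if_pos rfl]
  · intro τ _ hne
    rw [Finsupp.single_apply, if_neg (Ne.symm hne), zero_mul]

end Stmt14Viol

/-- Hawk-Dove with interdependent preferences: with discriminating types
`θ^n` that cooperate with their own kind and exploit others, (i) if `g > l` there is a
heterogeneous ESC in which higher levels play H against lower levels playing D and equal
levels play D; (ii) if `g = l` there is an NSC with the same properties; (iii) if `g < l`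
no NSC is supported on the types `θ^n`. -/
theorem stmt14 {T : Type} (g l : ℝ) (hg : 0 < g) (hl0 : 0 < l) (hl1 : l < 1)
    (M : IDModel (Fin 2) T) (hpi : M.π = hd g l)
    (hq : ∀ n n' : ℕ+, n' < n → M.q n n' = 1)
    (N : ℕ+) (hN1 : M.k N ≤ l + g) (hN2 : l + g < M.k (N + 1))
    (hmarg : ∀ n : ℕ+, n ≤ N → M.k (n + 1) - M.k n < g)
    (t : ℕ+ → T) (hlvl : ∀ n : ℕ+, M.lvl (t n) = n)
    (hutil : ∀ (n : ℕ+) (a a' : Fin 2) (t' : T), M.util (t n) a a' t' =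
      if (t' = t n ∧ a = 1) ∨ (t' ≠ t n ∧ a = 0) then 1 else 0) :
    (l < g → ∃ c : ConfigID M, IsESCID c ∧
      (∀ θ ∈ c.supp, ∃ n : ℕ+, n ≤ N ∧ θ = t n) ∧ 1 < c.supp.card ∧
      (∀ θ ∈ c.supp, ∀ θ' ∈ c.supp,
        (M.lvl θ' < M.lvl θ →
          c.bD θ θ' = pureStrat (0 : Fin 2) ∧ c.bD θ' θ = pureStrat (1 : Fin 2)) ∧
        (M.lvl θ = M.lvl θ' → c.bN θ θ' = pureStrat (1 : Fin 2)))) ∧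
    (g = l → ∃ c : ConfigID M, IsNSCID c ∧
      (∀ θ ∈ c.supp, ∃ n : ℕ+, n ≤ N ∧ θ = t n) ∧ 1 < c.supp.card ∧
      (∀ θ ∈ c.supp, ∀ θ' ∈ c.supp,
        (M.lvl θ' < M.lvl θ →
          c.bD θ θ' = pureStrat (0 : Fin 2) ∧ c.bD θ' θ = pureStrat (1 : Fin 2)) ∧
        (M.lvl θ = M.lvl θ' → c.bN θ θ' = pureStrat (1 : Fin 2)))) ∧
    (g < l → ¬ ∃ c : ConfigID M, (∀ θ ∈ c.supp, ∃ n : ℕ+, θ = t n) ∧ IsNSCID c) := by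
  classical
  refine ⟨?_, ?_, ?_⟩
  · -- (i) ESC for g > l
    intro hlg
    obtain ⟨c, h1, h2, h3, h4⟩ := stmt14_main g l hg hl0 hl1 (le_of_lt hlg) M hpi hq
      N hN1 hN2 hmarg t hlvl hutil
    refine ⟨c, ?_, h1, h2, h3⟩
    intro μ' _
    refine ⟨1/2, ⟨by norm_num, by norm_num⟩, ?_⟩
    intro ε _ ct hfoc _
    intro ν hν hνne
    obtain ⟨εb, hεb, H⟩ := h4 ct hfoc ν hν
    exact ⟨εb, hεb, fun ε' hε' => (H ε' hε').2 hlg hνne⟩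
  · -- (ii) NSC for g = l
    intro hge
    obtain ⟨c, h1, h2, h3, h4⟩ := stmt14_main g l hg hl0 hl1 (le_of_eq hge.symm) M hpi hq
      N hN1 hN2 hmarg t hlvl hutil
    refine ⟨c, ?_, h1, h2, h3⟩
    intro μ'
    refine ⟨1/2, ⟨by norm_num, by norm_num⟩, ?_⟩
    intro ε _ ct hfoc _
    intro ν hν
    obtain ⟨εb, hεb, H⟩ := h4 ct hfoc ν hν
    exact ⟨εb, hεb, fun ε' hε' => (H ε' hε').1⟩
  · -- (iii) no NSC for g < l
    intro hgl
    rintro ⟨c, hsuppθ, hNSC⟩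
    set W : T →₀ ℝ := c.dist.w with hW
    set Sp : Finset T := c.supp with hSp
    have hSpne : Sp.Nonempty := by
      rw [Finset.nonempty_iff_ne_empty]
      intro h
      have htot := c.dist.total
      rw [show c.dist.w.support = Sp from rfl, h] at htot
      simp at htot
    obtain ⟨εb0, hεb0, H0⟩ := hNSC c.dist
    have hselfmix : c.dist.w = (1-(εb0/2)) • c.dist.w + (εb0/2) • c.dist.w := by
      rw [← add_smul]
      have he : (1-(εb0/2)) + (εb0/2) = 1 := by ring
      rw [he, one_smul]
    have hNSS : IsNSSOnID (typePayID c) c.supp c.dist :=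
      H0 (εb0/2) ⟨by linarith [hεb0.1], by linarith [hεb0.1]⟩ c
        ⟨Finset.Subset.refl _, fun _ _ _ _ => ⟨rfl, rfl⟩⟩ hselfmix
    set F : T → T → ℝ := typePayID c with hF
    have hFeq : ∀ a b : T, F a b = condFitID c a b - M.k (M.lvl a) := fun _ _ => rfl
    have hdiag : ∀ τ ∈ Sp, F τ τ = 1 - M.k (M.lvl τ) := by
      intro τ hτ
      obtain ⟨n, rfl⟩ := hsuppθ τ hτ
      have hq1 : M.q (M.lvl (t n)) (M.lvl (t n)) + M.q (M.lvl (t n)) (M.lvl (t n)) < 1 := by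
        rw [q_zero_of_not_lt (lt_irrefl _)]; norm_num
      have hNE := c.bN_mem (t n) hτ (t n) hτ hq1
      obtain ⟨hp, _⟩ := NEID_self_pin hutil n hNE
      rw [hFeq, condFit_of_lvl_eq c rfl, hp, hpi, exPay_hd_pp11]
    have hpairB : ∀ τ ∈ Sp, ∀ τ' ∈ Sp, τ ≠ τ' →
        condFitID c τ τ' + condFitID c τ' τ ≤ 2 + g - l := by
      intro τ hτ τ' hτ' hne
      obtain ⟨n, rfl⟩ := hsuppθ τ hτ
      obtain ⟨m, rfl⟩ := hsuppθ τ' hτ'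
      have hnm : n ≠ m := fun hc => hne (by rw [hc])
      rcases lt_or_gt_of_ne hnm with h | h
      · have hlv : M.lvl (t n) < M.lvl (t m) := by rw [hlvl, hlvl]; exact h
        have hde := c.bD_mem (t m) hτ' (t n) hτ hlv
        have hdec : c.bD (t m) (t n) = pureStrat 0 :=
          DEID_theta_deceiver_pin hutil m (fun hc => hnm (t_inj hlvl hc)) hde
        have hund := DEID_deceived_theta hutil hlvl n hde
        rw [condFit_of_lvl_lt' hq c hlv, condFit_of_lvl_lt hq c hlv, hpi, hdec]
        rcases hund with h' | h' <;> rw [h']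
        · rw [exPay_hd_pp00]
          linarith
        · rw [exPay_hd_pp10, exPay_hd_pp01]
          linarith
      · have hlv : M.lvl (t m) < M.lvl (t n) := by rw [hlvl, hlvl]; exact h
        have hde := c.bD_mem (t n) hτ (t m) hτ' hlv
        have hdec : c.bD (t n) (t m) = pureStrat 0 :=
          DEID_theta_deceiver_pin hutil n (fun hc => hnm (t_inj hlvl hc).symm) hde
        have hund := DEID_deceived_theta hutil hlvl m hde
        rw [condFit_of_lvl_lt hq c hlv, condFit_of_lvl_lt' hq c hlv, hpi, hdec]
        rcases hund with h' | h' <;> rw [h']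
        · rw [exPay_hd_pp00]
          linarith
        · rw [exPay_hd_pp01, exPay_hd_pp10]
          linarith
    by_cases hcard : 2 ≤ Sp.card
    · -- at least two incumbents : pairwise invasion
      obtain ⟨τa, hτa, τb, hτb, hab⟩ := Finset.one_lt_card.mp (lt_of_lt_of_le one_lt_two hcard)
      set rowf : T → ℝ := fun τ => ∑ τ' ∈ Sp, W τ' * F τ τ' with hrowf
      have main : ∀ a ∈ Sp, ∀ b ∈ Sp, a ≠ b → rowf b ≤ rowf a → False := by
        intro a ha b hb hne hord
        have hWb : 0 < W b := by
          have hmem := Finsupp.mem_support_iff.1 (show b ∈ W.support from hb)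
          exact lt_of_le_of_ne (c.dist.nonneg b) (Ne.symm hmem)
        set δ : ℝ := W b / 2 with hδ
        have hδpos : 0 < δ := by rw [hδ]; linarith
        set νw : T →₀ ℝ := W + Finsupp.single a δ - Finsupp.single b δ with hνw
        have hνapp : ∀ τ, νw τ = W τ + (Finsupp.single a δ) τ - (Finsupp.single b δ) τ := by
          intro τ
          rw [hνw]
          simp [Finsupp.add_apply, Finsupp.sub_apply]
        have hνsupp : νw.support ⊆ Sp := by
          intro τ hτ
          rw [Finsupp.mem_support_iff] at hτ
          by_contra hc
          apply hτ
          rw [hνapp]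
          have hWτ : W τ = 0 := Finsupp.notMem_support_iff.1 (fun h => hc h)
          have ha' : (Finsupp.single a δ) τ = 0 := by
            rw [Finsupp.single_apply, if_neg (fun h => hc (by rw [← h]; exact ha))]
          have hb' : (Finsupp.single b δ) τ = 0 := by
            rw [Finsupp.single_apply, if_neg (fun h => hc (by rw [← h]; exact hb))]
          rw [hWτ, ha', hb']
          ring
        have hνnn : ∀ τ, 0 ≤ νw τ := by
          intro τ
          rw [hνapp, Finsupp.single_apply, Finsupp.single_apply]
          have hWτ := c.dist.nonneg τ
          by_cases h1 : a = τ
          · rw [if_pos h1, if_neg (fun h2 : b = τ => hne ((h2.trans h1.symm) ▸ rfl))]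
            linarith
          · rw [if_neg h1]
            by_cases h2 : b = τ
            · rw [if_pos h2, ← h2, hδ]
              linarith
            · rw [if_neg h2]
              linarith
        have hνtot : ∑ τ ∈ Sp, νw τ = 1 := by
          rw [Finset.sum_congr rfl (fun τ _ => hνapp τ)]
          have hsa : ∑ τ ∈ Sp, (Finsupp.single a δ) τ = δ := by
            rw [Finset.sum_eq_single_of_mem a ha]
            · rw [Finsupp.single_apply, if_pos rfl]
            · intro τ _ hne'
              rw [Finsupp.single_apply, if_neg (Ne.symm hne')]
          have hsb : ∑ τ ∈ Sp, (Finsupp.single b δ) τ = δ := by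
            rw [Finset.sum_eq_single_of_mem b hb]
            · rw [Finsupp.single_apply, if_pos rfl]
            · intro τ _ hne'
              rw [Finsupp.single_apply, if_neg (Ne.symm hne')]
          have hsw : ∑ τ ∈ Sp, W τ = 1 := distid_sum_over c.dist Sp (Finset.Subset.refl _)
          rw [Finset.sum_sub_distrib, Finset.sum_add_distrib, hsw, hsa, hsb]
          ring
        set ν : DistID T := ⟨νw, hνnn, distid_total_of νw Sp hνsupp hνtot⟩ with hν
        obtain ⟨εb2, hεb2, H2⟩ := hNSS ν hνsupp
        have hzmul : ∀ f : T → ℝ, ∑ τ ∈ Sp, (νw τ - W τ) * f τ = δ * (f a - f b) := by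
          intro f
          have h1 : ∀ τ ∈ Sp, (νw τ - W τ) * f τ
              = (Finsupp.single a δ) τ * f τ - (Finsupp.single b δ) τ * f τ := by
            intro τ _
            rw [hνapp]
            ring
          rw [Finset.sum_congr rfl h1, Finset.sum_sub_distrib,
            sum_single_mul Sp a ha δ f, sum_single_mul Sp b hb δ f]
          ring
        have hq2inner : ∀ τ : T, (∑ τ' ∈ Sp, (νw τ' - W τ') * F τ τ')
            = δ * (F τ a - F τ b) := fun τ => hzmul (fun τ' => F τ τ')
        have hq2val : (∑ τ ∈ Sp, (νw τ - W τ) * (∑ τ' ∈ Sp, (νw τ' - W τ') * F τ τ'))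
            = δ * (δ * (F a a - F a b) - δ * (F b a - F b b)) := by
          rw [Finset.sum_congr rfl (fun τ _ => by rw [hq2inner τ])]
          exact hzmul (fun τ => δ * (F τ a - F τ b))
        have hq2pos : 0 < (∑ τ ∈ Sp, (νw τ - W τ) * (∑ τ' ∈ Sp, (νw τ' - W τ') * F τ τ')) := by
          rw [hq2val]
          have hFaa := hdiag a ha
          have hFbb := hdiag b hb
          have hFab : F a b + F b a ≤ 2 + g - l - M.k (M.lvl a) - M.k (M.lvl b) := by
            rw [hFeq, hFeq]
            have := hpairB a ha b hb hne
            linarith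
          have hE : 0 < F a a + F b b - (F a b + F b a) := by
            rw [hFaa, hFbb]
            linarith
          have hprod := mul_pos (mul_pos hδpos hδpos) hE
          nlinarith [hprod]
        exact nss_violation F Sp W νw (Finset.Subset.refl _) hνsupp
          (by rw [hzmul rowf]; nlinarith [hδpos.le, hord]) (Or.inr hq2pos) εb2 hεb2 H2
      rcases le_total (rowf τb) (rowf τa) with h | h
      · exact main τa hτa τb hτb hab h
      · exact main τb hτb τa hτa (Ne.symm hab) h
    · -- a single incumbent : invasion by a discriminating mutant
      push_neg at hcard
      have hcard1 : Sp.card = 1 := le_antisymm (by omega) hSpne.card_pos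
      obtain ⟨τ0, hτ0⟩ := Finset.card_eq_one.mp hcard1
      have hτ0mem : τ0 ∈ Sp := by rw [hτ0]; exact Finset.mem_singleton_self τ0
      obtain ⟨n, hn⟩ := hsuppθ τ0 hτ0mem
      subst hn
      have hW1 : W (t n) = 1 := by
        have htot := c.dist.total
        rw [show c.dist.w.support = Sp from rfl, hτ0, Finset.sum_singleton] at htot
        exact htot
      have hWother : ∀ τ : T, τ ≠ t n → W τ = 0 := by
        intro τ hτ
        apply Finsupp.notMem_support_iff.1
        rw [show W.support = Sp from rfl, hτ0, Finset.mem_singleton]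
        exact hτ
      obtain ⟨j, hjn, hRgain⟩ : ∃ j : ℕ+, j ≠ n ∧
          1 - M.k n < (if n < j then 1 + g - M.k j else 1 - l - M.k j) := by
        by_cases hkn : M.k n ≤ l
        · refine ⟨n + 1, ?_, ?_⟩
          · intro hc
            have hcc := congrArg PNat.val hc
            rw [PNat.add_coe, PNat.one_coe] at hcc
            omega
          · have hnN : n ≤ N := by
              have h1 : n < N + 1 := by
                rw [← M.k_mono.lt_iff_lt]
                linarith
              exact PNat.lt_add_one_iff.1 h1
            rw [if_pos (by
              rw [← PNat.coe_lt_coe, PNat.add_coe, PNat.one_coe]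
              omega : n < n + 1)]
            have := hmarg n hnN
            linarith
        · push_neg at hkn
          refine ⟨1, ?_, ?_⟩
          · intro hc
            rw [← hc, M.k_one] at hkn
            linarith
          · rw [if_neg (not_lt.2 n.one_le), M.k_one]
            linarith
      have htjn : t j ≠ t n := fun hc => hjn (t_inj hlvl hc)
      have hlvljn : M.lvl (t j) ≠ M.lvl (t n) := by
        rw [hlvl, hlvl]
        exact fun hc => hjn hc
      obtain ⟨εb1, hεb1, H1⟩ := hNSC ⟨Finsupp.single (t j) 1, single_one_nonneg _,
        single_one_total _⟩
      set ε1 : ℝ := εb1/2 with hε1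
      have hε1pos : 0 < ε1 := by rw [hε1]; linarith [hεb1.1]
      have hε1lt1 : ε1 < 1 := by rw [hε1]; linarith [hεb1.2]
      set dw : T →₀ ℝ := (1 - ε1) • W + ε1 • (Finsupp.single (t j) 1) with hdw
      have hdwapp : ∀ τ, dw τ = (1-ε1) * W τ + ε1 * (Finsupp.single (t j) (1:ℝ)) τ :=
        fun τ => mix_apply _ _ _ _ τ
      set P2 : Finset T := insert (t j) Sp with hP2
      have hdwsupp : dw.support ⊆ P2 := by
        refine subset_trans (mix_support_subset _ _ _ _) ?_
        apply Finset.union_subset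
        · intro τ hτ
          exact Finset.mem_insert_of_mem hτ
        · intro τ hτ
          rw [Finsupp.support_single_ne_zero _ (by norm_num : (1:ℝ) ≠ 0),
            Finset.mem_singleton] at hτ
          rw [hτ]
          exact Finset.mem_insert_self _ _
      have hdwnn : ∀ τ, 0 ≤ dw τ := by
        intro τ
        rw [hdwapp]
        have h1 := c.dist.nonneg τ
        have h2 := single_one_nonneg (t j) τ
        nlinarith [hε1pos.le, hε1lt1.le]
      have hdwtot : ∑ τ ∈ dw.support, dw τ = 1 := by
        apply distid_total_of dw P2 hdwsupp
        rw [Finset.sum_congr rfl (fun τ _ => hdwapp τ)]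
        rw [Finset.sum_add_distrib, ← Finset.mul_sum, ← Finset.mul_sum]
        have hsw : ∑ τ ∈ P2, W τ = 1 := distid_sum_over c.dist P2
          (fun τ hτ => Finset.mem_insert_of_mem hτ)
        have hss : ∑ τ ∈ P2, (Finsupp.single (t j) (1:ℝ)) τ = 1 := by
          rw [Finset.sum_eq_single_of_mem (t j) (Finset.mem_insert_self _ _)]
          · rw [Finsupp.single_apply, if_pos rfl]
          · intro τ _ hne'
            rw [Finsupp.single_apply, if_neg (Ne.symm hne')]
        rw [hsw, hss]
        ring
      have htjSp : t j ∉ Sp := by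
        rw [hτ0, Finset.mem_singleton]
        exact htjn
      have hdwmem : ∀ τ ∈ dw.support, τ = t j ∨ τ = t n := by
        intro τ hτ
        have hm := hdwsupp hτ
        rw [hP2, Finset.mem_insert] at hm
        rcases hm with h | h
        · exact Or.inl h
        · right
          rw [hτ0, Finset.mem_singleton] at h
          exact h
      set bN' : T → T → Mixed (Fin 2) := fun a b =>
        if a ∈ Sp ∧ b ∈ Sp then c.bN a b else pureStrat 1 with hbN'
      set bD' : T → T → Mixed (Fin 2) := fun a b =>
        if a ∈ Sp ∧ b ∈ Sp then c.bD a b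
        else (if M.lvl b < M.lvl a then pureStrat 0 else pureStrat 1) with hbD'
      have hbN'nn : ∀ a b : T, a ∈ Sp → b ∈ Sp → bN' a b = c.bN a b :=
        fun a b ha hb => if_pos ⟨ha, hb⟩
      have hbD'in : ∀ a b : T, a ∈ Sp → b ∈ Sp → bD' a b = c.bD a b :=
        fun a b ha hb => if_pos ⟨ha, hb⟩
      have hbN'mem : ∀ a ∈ dw.support, ∀ b ∈ dw.support,
          M.q (M.lvl a) (M.lvl b) + M.q (M.lvl b) (M.lvl a) < 1 →
          (bN' a b, bN' b a) ∈ NEID M a b := by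
        intro a ha b hb hq1
        rcases hdwmem a ha with rfl | rfl <;> rcases hdwmem b hb with rfl | rfl
        · rw [show bN' (t j) (t j) = pureStrat 1 from if_neg (fun hc => htjSp hc.1)]
          exact NEID_self_mem hutil j
        · exfalso
          rcases lt_or_gt_of_ne hlvljn with h | h
          · have := qsum_one hq h
            rw [add_comm] at this
            linarith
          · have := qsum_one hq h
            linarith
        · exfalso
          rcases lt_or_gt_of_ne hlvljn with h | h
          · have := qsum_one hq h
            linarith
          · have := qsum_one hq h
            rw [add_comm] at this
            linarith
        · rw [hbN'nn _ _ hτ0mem hτ0mem]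
          have hq2 : M.q (M.lvl (t n)) (M.lvl (t n)) + M.q (M.lvl (t n)) (M.lvl (t n)) < 1 := by
            rw [q_zero_of_not_lt (lt_irrefl _)]; norm_num
          have := c.bN_mem (t n) hτ0mem (t n) hτ0mem hq2
          obtain ⟨hp1, hp2⟩ := NEID_self_pin hutil n this
          rw [hp1]
          rw [hp1] at this
          exact this
      have hbD'mem : ∀ a ∈ dw.support, ∀ b ∈ dw.support, M.lvl b < M.lvl a →
          (bD' a b, bD' b a) ∈ DEID M a b := by
        intro a ha b hb hlt
        rcases hdwmem a ha with rfl | rfl <;> rcases hdwmem b hb with rfl | rfl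
        · exact absurd hlt (lt_irrefl _)
        · rw [show bD' (t j) (t n) = pureStrat 0 from by
              rw [hbD']
              simp only
              rw [if_neg (fun hc => htjSp hc.1), if_pos hlt],
            show bD' (t n) (t j) = pureStrat 1 from by
              rw [hbD']
              simp only
              rw [if_neg (fun hc => htjSp hc.2), if_neg (not_lt_of_gt hlt)]]
          exact DEID_theta_mem hutil hlvl (fun hc => hjn hc.symm)
        · rw [show bD' (t n) (t j) = pureStrat 0 from by
              rw [hbD']
              simp only
              rw [if_neg (fun hc => htjSp hc.2), if_pos hlt],
            show bD' (t j) (t n) = pureStrat 1 from by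
              rw [hbD']
              simp only
              rw [if_neg (fun hc => htjSp hc.1), if_neg (not_lt_of_gt hlt)]]
          exact DEID_theta_mem hutil hlvl (fun hc => hjn hc)
        · exact absurd hlt (lt_irrefl _)
      set ct : ConfigID M := ⟨⟨dw, hdwnn, hdwtot⟩, bN', bD', hbN'mem, hbD'mem⟩ with hct
      have hctsupp : ct.supp = dw.support := rfl
      have htnP : t n ∈ ct.supp := by
        rw [hctsupp, Finsupp.mem_support_iff, hdwapp, hW1, Finsupp.single_apply,
          if_neg htjn]
        intro hc
        nlinarith [hε1lt1]
      have htjP : t j ∈ ct.supp := by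
        rw [hctsupp, Finsupp.mem_support_iff, hdwapp, hWother (t j) htjn,
          Finsupp.single_apply, if_pos rfl]
        intro hc
        nlinarith [hε1pos]
      have hfocal : FocalID c ct := by
        constructor
        · intro τ hτ
          have : τ = t n := by
            rw [show c.supp = Sp from rfl, hτ0, Finset.mem_singleton] at hτ
            exact hτ
          rw [this]
          exact htnP
        · intro θ hθ θ' hθ'
          have h1 : θ ∈ Sp := hθ
          have h2 : θ' ∈ Sp := hθ'
          exact ⟨hbN'nn θ θ' h1 h2, hbD'in θ θ' h1 h2⟩
      have hNSS1 : IsNSSOnID (typePayID ct) ct.supp c.dist :=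
        H1 ε1 ⟨hε1pos, by rw [hε1]; linarith [hεb1.1]⟩ ct hfocal hdw
      set F' : T → T → ℝ := typePayID ct with hF'
      have hF'eq : ∀ a b : T, F' a b = condFitID ct a b - M.k (M.lvl a) := fun _ _ => rfl
      -- the two relevant entries
      have hcbNn : c.bN (t n) (t n) = pureStrat 1 := by
        have hq2 : M.q (M.lvl (t n)) (M.lvl (t n)) + M.q (M.lvl (t n)) (M.lvl (t n)) < 1 := by
          rw [q_zero_of_not_lt (lt_irrefl _)]; norm_num
        exact (NEID_self_pin hutil n (c.bN_mem (t n) hτ0mem (t n) hτ0mem hq2)).1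
      have hFnn : F' (t n) (t n) = 1 - M.k n := by
        rw [hF'eq, condFit_of_lvl_eq ct rfl]
        rw [show ct.bN (t n) (t n) = pureStrat 1 from by
          rw [show ct.bN = bN' from rfl, hbN'nn _ _ hτ0mem hτ0mem, hcbNn]]
        rw [hpi, exPay_hd_pp11, hlvl]
      have hFjn : F' (t j) (t n) = (if n < j then 1 + g - M.k j else 1 - l - M.k j) := by
        have hbDjn1 : bD' (t j) (t n) = (if M.lvl (t n) < M.lvl (t j) then pureStrat 0
            else pureStrat 1) := by
          rw [hbD']
          simp only
          rw [if_neg (fun hc => htjSp hc.1)]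
        have hbDnj1 : bD' (t n) (t j) = (if M.lvl (t j) < M.lvl (t n) then pureStrat 0
            else pureStrat 1) := by
          rw [hbD']
          simp only
          rw [if_neg (fun hc => htjSp hc.2)]
        rcases lt_or_gt_of_ne hjn with h | h
        · -- j < n
          have hlv : M.lvl (t j) < M.lvl (t n) := by rw [hlvl, hlvl]; exact h
          rw [hF'eq, condFit_of_lvl_lt' hq ct hlv]
          rw [show ct.bD (t j) (t n) = pureStrat 1 from by
              rw [show ct.bD = bD' from rfl, hbDjn1, if_neg (not_lt_of_gt hlv)],
            show ct.bD (t n) (t j) = pureStrat 0 from by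
              rw [show ct.bD = bD' from rfl, hbDnj1, if_pos hlv]]
          rw [hpi, exPay_hd_pp10, hlvl, if_neg (not_lt_of_gt h)]
        · -- n < j
          have hlv : M.lvl (t n) < M.lvl (t j) := by rw [hlvl, hlvl]; exact h
          rw [hF'eq, condFit_of_lvl_lt hq ct hlv]
          rw [show ct.bD (t j) (t n) = pureStrat 0 from by
              rw [show ct.bD = bD' from rfl, hbDjn1, if_pos hlv],
            show ct.bD (t n) (t j) = pureStrat 1 from by
              rw [show ct.bD = bD' from rfl, hbDnj1, if_neg (not_lt_of_gt hlv)]]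
          rw [hpi, exPay_hd_pp01, hlvl, if_pos h]
      -- the violation
      set νs : DistID T := ⟨Finsupp.single (t j) 1, single_one_nonneg _,
        single_one_total _⟩ with hνs
      have hνssupp : νs.w.support ⊆ ct.supp := by
        intro τ hτ
        rw [show νs.w = Finsupp.single (t j) 1 from rfl,
          Finsupp.support_single_ne_zero _ (by norm_num : (1:ℝ) ≠ 0),
          Finset.mem_singleton] at hτ
        rw [hτ]
        exact htjP
      obtain ⟨εb2, hεb2, H2⟩ := hNSS1 νs hνssupp
      have hμP2 : W.support ⊆ ct.supp := by
        intro τ hτ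
        exact hfocal.1 hτ
      have hcol : ∀ f : T → ℝ, ∑ τ ∈ ct.supp, W τ * f τ = f (t n) := by
        intro f
        rw [Finset.sum_eq_single_of_mem (t n) htnP]
        · rw [hW1, one_mul]
        · intro τ _ hne'
          rw [hWother τ hne', zero_mul]
      have hspos : 0 < ∑ τ ∈ ct.supp, (νs.w τ - W τ)
          * (∑ τ' ∈ ct.supp, W τ' * F' τ τ') := by
        have h1 : ∀ τ ∈ ct.supp, (νs.w τ - W τ) * (∑ τ' ∈ ct.supp, W τ' * F' τ τ')
            = νs.w τ * F' τ (t n) - W τ * F' τ (t n) := by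
          intro τ _
          rw [hcol (fun τ' => F' τ τ')]
          ring
        rw [Finset.sum_congr rfl h1, Finset.sum_sub_distrib]
        rw [show ∑ τ ∈ ct.supp, νs.w τ * F' τ (t n) = F' (t j) (t n) from by
          rw [show νs.w = Finsupp.single (t j) 1 from rfl]
          rw [sum_single_mul ct.supp (t j) htjP 1 (fun τ => F' τ (t n)), one_mul]]
        rw [hcol (fun τ => F' τ (t n))]
        rw [hFjn, hFnn]
        linarith
      exact nss_violation F' ct.supp W νs.w hμP2 hνssupp hspos.le (Or.inl hspos)
        εb2 hεb2 H2
end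
end

section
/- Every neutrally stable configuration is balanced: if (μ,b) is an NSC, then all incumbent types obtain the same expected fitness, i.e. Π_{θ|(μ,b)} = Π_{(μ,b)} for every θ∈C(μ). -/
open scoped Classical
set_option maxHeartbeats 1000000

noncomputable section

variable {A : Type} [Fintype A]

lemma playT_superset (F : GType A → GType A → ℝ) (x y : GType A →₀ ℝ)
    (S T : Finset (GType A)) (hx : x.support ⊆ S) (hy : y.support ⊆ T) :
    playT F x y = ∑ a ∈ S, ∑ b ∈ T, x a * y b * F a b := by
  unfold playT
  rw [Finset.sum_subset hx]
  · refine Finset.sum_congr rfl fun a _ => ?_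
    refine Finset.sum_subset hy fun b _ hb => ?_
    simp [Finsupp.notMem_support_iff.mp hb]
  · intro a _ ha
    simp [Finsupp.notMem_support_iff.mp ha]

lemma aux_eps {d e εb : ℝ} (hεb : 0 < εb)
    (h : ∀ ε ∈ Set.Ioo (0:ℝ) εb, d ≤ ε * e) : d ≤ 0 := by
  by_contra hd
  push_neg at hd
  have h1 := h (εb/2) ⟨by linarith, by linarith⟩
  have he : 0 < e := by nlinarith
  have hm : min (εb/2) (d/(2*e)) ∈ Set.Ioo (0:ℝ) εb := by
    constructor
    · exact lt_min (by linarith) (by positivity)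
    · calc min (εb/2) (d/(2*e)) ≤ εb/2 := min_le_left _ _
        _ < εb := by linarith
  have h2 := h _ hm
  have h3 : min (εb/2) (d/(2*e)) * e ≤ (d/(2*e)) * e :=
    mul_le_mul_of_nonneg_right (min_le_right _ _) he.le
  have h4 : (d/(2*e)) * e = d/2 := by field_simp
  linarith

/-- Every NSC is balanced: all incumbent types obtain the same expected
fitness, equal to the population average fitness. -/
theorem stmt18 [Nonempty A] (hA : 3 ≤ Fintype.card A) (M : Model A)
    (c : Config M) (hNSC : IsNSC c) :
    ∀ θ ∈ c.supp, expFit c θ = avgFit c := by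
  classical
  have hwtot : ∑ x ∈ c.dist.w.support, c.dist.w x = 1 := c.dist.total
  -- the inner-row computation
  have hrow : ∀ a : GType A,
      ∑ b ∈ c.dist.w.support, c.dist.w b * typePay c a b = expFit c a := by
    intro a
    have h1 : ∀ b ∈ c.dist.w.support,
        c.dist.w b * typePay c a b
          = c.dist.w b * condFit c a b - c.dist.w b * M.k a.2 := by
      intro b _; unfold typePay; ring
    rw [Finset.sum_congr rfl h1, Finset.sum_sub_distrib, ← Finset.sum_mul, hwtot]
    unfold expFit Config.supp
    ring
  -- key inequality: every incumbent's fitness is at most the average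
  have key : ∀ θ ∈ c.supp, expFit c θ ≤ avgFit c := by
    intro θ hθ
    have hθ' : θ ∈ c.dist.w.support := hθ
    have hwθpos : 0 < c.dist.w θ :=
      lt_of_le_of_ne (c.dist.nonneg θ) (Ne.symm (Finsupp.mem_support_iff.mp hθ'))
    set δ : GType A →₀ ℝ := Finsupp.single θ 1 with hδ
    have hδsupp : δ.support = {θ} := Finsupp.support_single_ne_zero θ one_ne_zero
    have δnn : ∀ θ', 0 ≤ δ θ' := by
      intro θ'
      rw [hδ, Finsupp.single_apply]
      split <;> norm_num
    have hδtot : ∑ θ' ∈ δ.support, δ θ' = 1 := by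
      rw [hδsupp]; simp [hδ]
    have hδS : δ.support ⊆ c.dist.w.support := by
      rw [hδsupp]; simpa using hθ'
    have hδsum : ∑ x ∈ c.dist.w.support, δ x = 1 := by
      rw [hδ]
      simp only [Finsupp.single_apply]
      rw [Finset.sum_ite_eq]
      simp [hθ']
    set μδ : TypeDist A := ⟨δ, δnn, hδtot⟩ with hμδ
    obtain ⟨εb, hεb, hmain⟩ := hNSC μδ
    set ε0 : ℝ := εb/2 with hε0
    have hε0m : ε0 ∈ Set.Ioo (0:ℝ) εb := ⟨by simp [hε0]; linarith [hεb.1], by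
      simp only [hε0]; linarith [hεb.1]⟩
    have hε0lt1 : ε0 < 1 := by simp only [hε0]; linarith [hεb.1, hεb.2]
    set w' : GType A →₀ ℝ := (1 - ε0) • c.dist.w + ε0 • δ with hw'
    have hw'app : ∀ x, w' x = (1 - ε0) * c.dist.w x + ε0 * δ x := by
      intro x; simp [hw']
    have hw'nn : ∀ x, 0 ≤ w' x := by
      intro x
      rw [hw'app]
      have h1 := c.dist.nonneg x
      have h2 := δnn x
      nlinarith [hε0m.1]
    have hw'supp : w'.support = c.dist.w.support := by
      ext x
      simp only [Finsupp.mem_support_iff]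
      by_cases hxθ : x = θ
      · subst hxθ
        constructor
        · intro _; exact Finsupp.mem_support_iff.mp hθ'
        · intro _
          rw [hw'app]
          have : δ x = 1 := by rw [hδ]; simp
          rw [this]
          nlinarith [hε0m.1]
      · have hδx : δ x = 0 := by
          rw [hδ, Finsupp.single_apply, if_neg (fun h => hxθ h.symm)]
        rw [hw'app, hδx, mul_zero, add_zero]
        constructor
        · intro h hx0; exact h (by rw [hx0, mul_zero])
        · intro h
          intro hcontra
          have : c.dist.w x = 0 := by
            rcases mul_eq_zero.mp hcontra with h' | h'
            · linarith
            · exact h'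
          exact h this
    have hw'tot : ∑ x ∈ w'.support, w' x = 1 := by
      rw [hw'supp]
      calc ∑ x ∈ c.dist.w.support, w' x
          = ∑ x ∈ c.dist.w.support, ((1-ε0) * c.dist.w x + ε0 * δ x) :=
            Finset.sum_congr rfl fun x _ => hw'app x
        _ = (1-ε0) * ∑ x ∈ c.dist.w.support, c.dist.w x
              + ε0 * ∑ x ∈ c.dist.w.support, δ x := by
            rw [Finset.sum_add_distrib, Finset.mul_sum, Finset.mul_sum]
        _ = 1 := by rw [hwtot, hδsum]; ring
    set ct : Config M :=
      ⟨⟨w', hw'nn, hw'tot⟩, c.bN, c.bD,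
        by
          intro θa hθa θb hθb hq
          exact c.bN_mem θa (hw'supp ▸ hθa) θb (hw'supp ▸ hθb) hq,
        by
          intro θa hθa θb hθb hlt
          exact c.bD_mem θa (hw'supp ▸ hθa) θb (hw'supp ▸ hθb) hlt⟩ with hct
    have hctsupp : ct.supp = c.dist.w.support := hw'supp
    have hfocal : Focal c ct := by
      constructor
      · intro x hx; rw [hctsupp]; exact hx
      · intro _ _ _ _; exact ⟨rfl, rfl⟩
    have hNSS : IsNSSOn (typePay ct) ct.supp c.dist :=
      hmain ε0 hε0m ct hfocal rfl
    have hTP : typePay ct = typePay c := rfl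
    obtain ⟨εb2, hεb2, h2⟩ := hNSS μδ (by
      show δ.support ⊆ ct.supp
      rw [hctsupp]; exact hδS)
    -- bilinearity expansion
    have expand : ∀ (x : GType A →₀ ℝ), x.support ⊆ c.dist.w.support → ∀ ε : ℝ,
        playT (typePay c) x ((1-ε) • c.dist.w + ε • δ)
          = (1-ε) * playT (typePay c) x c.dist.w + ε * playT (typePay c) x δ := by
      intro x hx ε
      have hm : ((1-ε) • c.dist.w + ε • δ).support ⊆ c.dist.w.support := by
        refine Finsupp.support_add.trans (Finset.union_subset ?_ ?_)
        · exact (Finsupp.support_smul).trans (le_refl _)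
        · exact (Finsupp.support_smul).trans hδS
      rw [playT_superset (typePay c) x _ c.dist.w.support c.dist.w.support hx hm,
          playT_superset (typePay c) x c.dist.w c.dist.w.support c.dist.w.support hx (le_refl _),
          playT_superset (typePay c) x δ c.dist.w.support c.dist.w.support hx hδS,
          Finset.mul_sum, Finset.mul_sum, ← Finset.sum_add_distrib]
      refine Finset.sum_congr rfl fun a _ => ?_
      rw [Finset.mul_sum, Finset.mul_sum, ← Finset.sum_add_distrib]
      refine Finset.sum_congr rfl fun b _ => ?_
      simp only [Finsupp.coe_add, Finsupp.coe_smul, Pi.add_apply, Pi.smul_apply,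
        smul_eq_mul]
      ring
    set Pδw := playT (typePay c) δ c.dist.w with hPδwdef
    set Pδδ := playT (typePay c) δ δ with hPδδdef
    set Pww := playT (typePay c) c.dist.w c.dist.w with hPwwdef
    set Pwδ := playT (typePay c) c.dist.w δ with hPwδdef
    have hineq : ∀ ε ∈ Set.Ioo (0:ℝ) εb2,
        Pδw - Pww ≤ ε * ((Pδw - Pww) + (Pwδ - Pδδ)) := by
      intro ε hε
      have hle := h2 ε hε
      rw [hTP] at hle
      have e1 := expand δ hδS ε
      have e2 := expand c.dist.w (le_refl _) ε
      rw [show μδ.w = δ from rfl] at hle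
      rw [e1, e2] at hle
      nlinarith [hle]
    have hle : Pδw - Pww ≤ 0 := aux_eps hεb2.1 hineq
    -- identify Pδw and Pww
    have hPδw : Pδw = expFit c θ := by
      rw [hPδwdef,
        playT_superset (typePay c) δ c.dist.w c.dist.w.support c.dist.w.support hδS (le_refl _)]
      calc ∑ a ∈ c.dist.w.support, ∑ b ∈ c.dist.w.support, δ a * c.dist.w b * typePay c a b
          = ∑ a ∈ c.dist.w.support,
              δ a * ∑ b ∈ c.dist.w.support, c.dist.w b * typePay c a b := by
            refine Finset.sum_congr rfl fun a _ => ?_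
            rw [Finset.mul_sum]
            exact Finset.sum_congr rfl fun b _ => by ring
        _ = ∑ a ∈ c.dist.w.support,
              (if θ = a then ∑ b ∈ c.dist.w.support, c.dist.w b * typePay c a b else 0) := by
            refine Finset.sum_congr rfl fun a _ => ?_
            rw [hδ, Finsupp.single_apply, ite_mul, one_mul, zero_mul]
        _ = ∑ b ∈ c.dist.w.support, c.dist.w b * typePay c θ b := by
            rw [Finset.sum_ite_eq]; simp [hθ']
        _ = expFit c θ := hrow θ
    have hPww : Pww = avgFit c := by
      rw [hPwwdef,
        playT_superset (typePay c) c.dist.w c.dist.w c.dist.w.support c.dist.w.support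
          (le_refl _) (le_refl _)]
      unfold avgFit Config.supp
      refine Finset.sum_congr rfl fun a _ => ?_
      rw [← hrow a, Finset.mul_sum]
      exact Finset.sum_congr rfl fun b _ => by ring
    rw [hPδw, hPww] at hle
    linarith
  -- from the inequality, deduce equality via the averaging identity
  intro θ hθ
  have hsum0 : ∑ x ∈ c.supp, c.dist.w x * (avgFit c - expFit c x) = 0 := by
    have hexp : ∀ x ∈ c.supp,
        c.dist.w x * (avgFit c - expFit c x)
          = c.dist.w x * avgFit c - c.dist.w x * expFit c x := by
      intro x _; ring
    rw [Finset.sum_congr rfl hexp, Finset.sum_sub_distrib, ← Finset.sum_mul]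
    have h1 : ∑ x ∈ c.supp, c.dist.w x = 1 := c.dist.total
    have h2 : ∑ x ∈ c.supp, c.dist.w x * expFit c x = avgFit c := rfl
    rw [h1, h2]; ring
  have hterms : ∀ x ∈ c.supp, 0 ≤ c.dist.w x * (avgFit c - expFit c x) := by
    intro x hx
    exact mul_nonneg (c.dist.nonneg x) (by linarith [key x hx])
  have hzero := (Finset.sum_eq_zero_iff_of_nonneg hterms).mp hsum0 θ hθ
  have hwθ : c.dist.w θ ≠ 0 := Finsupp.mem_support_iff.mp hθ
  rcases mul_eq_zero.mp hzero with h | h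
  · exact absurd h hwθ
  · linarith
end
end

section
/- The symmetrization of any finite two-player game admits a symmetric efficient action profile: for any finite two-player game (A₁,A₂,π₁,π₂), define the symmetric game with action set A₁×A₂ and payoff π̃((a₁,a₂),(b₁,b₂)) = ½·π₁(a₁,b₂) + ½·π₂(b₁,a₂) (nature assigns each player to the row or column role with probability ½). Then there exists an action c∈A₁×A₂ such that 2·π̃(c,c) ≥ π̃(x,y)+π̃(y,x) for all x,y∈A₁×A₂; namely, if (a,a')∈A₁×A₂ maximises π₁(a,a')+π₂(a,a'), then c=(a,a') works. -/
/-- The symmetrization of any finite two-player game admits a symmetric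
efficient action profile; indeed any maximiser `(a,a')` of `π₁ + π₂` yields one. -/
theorem stmt19 {A1 A2 : Type} [Fintype A1] [Fintype A2] [Nonempty A1] [Nonempty A2]
    (p1 p2 : A1 → A2 → ℝ) :
    let pt : (A1 × A2) → (A1 × A2) → ℝ :=
      fun x y => p1 x.1 y.2 / 2 + p2 y.1 x.2 / 2
    (∃ c : A1 × A2, ∀ x y : A1 × A2, pt x y + pt y x ≤ 2 * pt c c) ∧
    (∀ (a : A1) (a' : A2), (∀ (b : A1) (b' : A2), p1 b b' + p2 b b' ≤ p1 a a' + p2 a a') →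
      ∀ x y : A1 × A2, pt x y + pt y x ≤ 2 * pt (a, a') (a, a')) := by
  intro pt
  have key : ∀ (a : A1) (a' : A2),
      (∀ (b : A1) (b' : A2), p1 b b' + p2 b b' ≤ p1 a a' + p2 a a') →
      ∀ x y : A1 × A2, pt x y + pt y x ≤ 2 * pt (a, a') (a, a') := by
    intro a a' hmax x y
    have h1 := hmax x.1 y.2
    have h2 := hmax y.1 x.2
    simp only [pt]
    linarith
  refine ⟨?_, key⟩
  obtain ⟨c, hc⟩ := Finite.exists_max (fun c : A1 × A2 => p1 c.1 c.2 + p2 c.1 c.2)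
  exact ⟨c, key c.1 c.2 (fun b b' => hc (b, b'))⟩
end
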